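/- arXiv:1710.02587 — 12 statements merged into one kernel-verified Lean document; each statement's English description precedes it below -/
import Mathlib

section
/- If A is a nonnegative m×n doubly balanced matrix (all row sums equal and all column sums equal), then cap(A) = s(A), where s(A) is the sum of all entries. -/
/-!
Evaluating at `x = 1` shows `cap A ≤ s(A)`. Conversely, if every row sums to `r > 0` and
every column to `c`, weighted AM-GM with the weights `A i j / r` gives
`(A x)_i ≥ r ∏_j x_j ^ (A i j / r)`; multiplying over `i`, the exponent of `x_j` becomes
`c / r = m / n`, so `∏_i (A x)_i ≥ r ^ m (∏_j x_j) ^ (m / n)`, which is `m r = s(A)` after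
normalisation.
-/

open Matrix BigOperators

/-- Capacity of a nonnegative matrix. -/
noncomputable def matCap {ι κ : Type*} [Fintype ι] [Fintype κ] (A : Matrix ι κ ℝ) : ℝ :=
  sInf {c : ℝ | ∃ x : κ → ℝ, (∀ j, 0 < x j) ∧
    c = (Fintype.card ι : ℝ) * (∏ i, A.mulVec x i) ^ ((1 : ℝ) / (Fintype.card ι : ℝ)) /
        (∏ j, x j) ^ ((1 : ℝ) / (Fintype.card κ : ℝ))}

/-- Size of a matrix: the sum of all entries. -/
noncomputable def matSize {ι κ : Type*} [Fintype ι] [Fintype κ] (A : Matrix ι κ ℝ) : ℝ :=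
  ∑ i, ∑ j, A i j

/-- The measure Δ of distance to doubly balanced. -/
noncomputable def matDelta {ι κ : Type*} [Fintype ι] [Fintype κ] (A : Matrix ι κ ℝ) : ℝ :=
  (1 / (Fintype.card ι : ℝ)) * ∑ i, (matSize A - (Fintype.card ι : ℝ) * ∑ j, A i j) ^ 2 +
  (1 / (Fintype.card κ : ℝ)) * ∑ j, (matSize A - (Fintype.card κ : ℝ) * ∑ i, A i j) ^ 2

section Capacity

variable {ι κ : Type*} [Fintype ι] [Fintype κ]

noncomputable def capObjective (A : Matrix ι κ ℝ) (x : κ → ℝ) : ℝ :=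
  (Fintype.card ι : ℝ) * (∏ i, (A *ᵥ x) i) ^ ((1 : ℝ) / (Fintype.card ι : ℝ)) /
    (∏ j, x j) ^ ((1 : ℝ) / (Fintype.card κ : ℝ))

lemma matSize_eq_card_mul_of_row_sum_eq {A : Matrix ι κ ℝ} {r : ℝ}
    (hrow : ∀ i, ∑ j, A i j = r) : matSize A = Fintype.card ι * r := by
  simp [matSize, hrow]

lemma matSize_eq_card_mul_of_col_sum_eq {A : Matrix ι κ ℝ} {c : ℝ}
    (hcol : ∀ j, ∑ i, A i j = c) : matSize A = Fintype.card κ * c := by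
  rw [matSize]
  exact Finset.sum_comm.trans (by simp [hcol])

lemma mul_prod_rpow_div_le_dotProduct {a x : κ → ℝ} {r : ℝ} (ha : ∀ j, 0 ≤ a j)
    (hr : 0 < r) (hsum : ∑ j, a j = r) (hx : ∀ j, 0 ≤ x j) :
    r * ∏ j, x j ^ (a j / r) ≤ a ⬝ᵥ x := by
  have amgm := Real.geom_mean_le_arith_mean_weighted Finset.univ (fun j => a j / r) x
    (fun j _ => div_nonneg (ha j) hr.le)
    (by rw [← Finset.sum_div, hsum, div_self hr.ne']) (fun j _ => hx j)
  calc r * ∏ j, x j ^ (a j / r) ≤ r * ∑ j, a j / r * x j := by gcongr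
    _ = a ⬝ᵥ x := by
      rw [Finset.mul_sum, dotProduct]
      congr 1 with j
      field_simp

lemma pow_mul_prod_rpow_le_prod_mulVec {A : Matrix ι κ ℝ} {x : κ → ℝ} {r c : ℝ}
    (hA : ∀ i j, 0 ≤ A i j) (hr : 0 < r) (hrow : ∀ i, ∑ j, A i j = r)
    (hcol : ∀ j, ∑ i, A i j = c) (hx : ∀ j, 0 < x j) :
    r ^ Fintype.card ι * (∏ j, x j) ^ (c / r) ≤ ∏ i, (A *ᵥ x) i := by
  have hcolExp : ∀ j, ∏ i, x j ^ (A i j / r) = x j ^ (c / r) := fun j => by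
    rw [← Real.rpow_sum_of_pos (hx j), ← Finset.sum_div, hcol j]
  calc r ^ Fintype.card ι * (∏ j, x j) ^ (c / r)
      = ∏ i, r * ∏ j, x j ^ (A i j / r) := by
        rw [Finset.prod_mul_distrib, Finset.prod_const, Finset.card_univ, Finset.prod_comm,
          Finset.prod_congr rfl fun j _ => hcolExp j,
          Real.finsetProd_rpow _ _ fun j _ => (hx j).le]
    _ ≤ ∏ i, (A *ᵥ x) i :=
      Finset.prod_le_prod
        (fun i _ => mul_nonneg hr.le (Finset.prod_nonneg fun j _ => Real.rpow_nonneg (hx j).le _))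
        (fun i _ => mul_prod_rpow_div_le_dotProduct (hA i) hr (hrow i) fun j => (hx j).le)

lemma capObjective_one [Nonempty ι] {A : Matrix ι κ ℝ} {r : ℝ} (hA : ∀ i j, 0 ≤ A i j)
    (hrow : ∀ i, ∑ j, A i j = r) : capObjective A 1 = matSize A := by
  obtain ⟨i₀⟩ := ‹Nonempty ι›
  have hr : 0 ≤ r := hrow i₀ ▸ Finset.sum_nonneg fun j _ => hA i₀ j
  have hmulVec : A *ᵥ 1 = fun _ => r := funext fun i => by simp [mulVec, dotProduct, hrow i]
  rw [capObjective, hmulVec, matSize_eq_card_mul_of_row_sum_eq hrow]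
  simp [Finset.prod_const, one_div, Real.pow_rpow_inv_natCast hr Fintype.card_ne_zero]

lemma matSize_le_capObjective [Nonempty ι] {A : Matrix ι κ ℝ} {x : κ → ℝ} {r c : ℝ}
    (hA : ∀ i j, 0 ≤ A i j) (hrow : ∀ i, ∑ j, A i j = r) (hcol : ∀ j, ∑ i, A i j = c)
    (hx : ∀ j, 0 < x j) : matSize A ≤ capObjective A x := by
  obtain ⟨i₀⟩ := ‹Nonempty ι›
  have hm : (0 : ℝ) < Fintype.card ι := by exact_mod_cast Fintype.card_pos
  have hP : 0 < ∏ j, x j := Finset.prod_pos fun j _ => hx j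
  rcases (hrow i₀ ▸ Finset.sum_nonneg fun j _ => hA i₀ j : 0 ≤ r).eq_or_lt with rfl | hr
  · rw [matSize_eq_card_mul_of_row_sum_eq hrow, mul_zero, capObjective]
    have hmulVec : ∀ i, 0 ≤ (A *ᵥ x) i := fun i =>
      Finset.sum_nonneg fun j _ => mul_nonneg (hA i j) (hx j).le
    have hprod := Finset.prod_nonneg fun i (_ : i ∈ Finset.univ) => hmulVec i
    positivity
  have hsize : (Fintype.card κ : ℝ) * c = Fintype.card ι * r := by
    rw [← matSize_eq_card_mul_of_col_sum_eq hcol, matSize_eq_card_mul_of_row_sum_eq hrow]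
  have hn : (Fintype.card κ : ℝ) ≠ 0 := fun h => by
    rw [h, zero_mul] at hsize
    exact (mul_pos hm hr).ne' hsize.symm
  have hexp : c / r * (1 / Fintype.card ι) = 1 / Fintype.card κ := by
    field_simp
    linarith
  calc matSize A
      = Fintype.card ι * (r ^ Fintype.card ι * (∏ j, x j) ^ (c / r)) ^
          ((1 : ℝ) / Fintype.card ι) / (∏ j, x j) ^ ((1 : ℝ) / Fintype.card κ) := by
        rw [Real.mul_rpow (by positivity) (by positivity), one_div (Fintype.card ι : ℝ),
          Real.pow_rpow_inv_natCast hr.le Fintype.card_ne_zero, ← Real.rpow_mul hP.le,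
          ← one_div, hexp, matSize_eq_card_mul_of_row_sum_eq hrow]
        field_simp
    _ ≤ capObjective A x := by
      rw [capObjective]
      gcongr
      exact pow_mul_prod_rpow_le_prod_mulVec hA hr hrow hcol hx

end Capacity

/-- For a doubly balanced nonnegative matrix, the capacity equals the size. -/
theorem matCap_eq_matSize_of_doublyBalanced {m n : ℕ} (hm : 0 < m) (hn : 0 < n)
    (A : Matrix (Fin m) (Fin n) ℝ) (hA : ∀ i j, 0 ≤ A i j)
    (hrow : ∀ i i' : Fin m, ∑ j, A i j = ∑ j, A i' j)
    (hcol : ∀ j j' : Fin n, ∑ i, A i j = ∑ i, A i j') :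
    matCap A = matSize A := by
  have : Nonempty (Fin m) := ⟨⟨0, hm⟩⟩
  have hrow₀ : ∀ i, ∑ j, A i j = ∑ j, A ⟨0, hm⟩ j := fun i => hrow i _
  have hcol₀ : ∀ j, ∑ i, A i j = ∑ i, A i ⟨0, hn⟩ := fun j => hcol j _
  refine IsLeast.csInf_eq ⟨⟨1, fun _ => one_pos, (capObjective_one hA hrow₀).symm⟩, ?_⟩
  rintro _ ⟨x, hx, rfl⟩
  exact matSize_le_capObjective hA hrow₀ hcol₀ hx
end

section
/- Let A be a nonnegative n×n matrix with total entry sum s = ∑_{ij} A_{ij} = n². If cap(A) = 0, then Δ(A) ≥ 2n², where Δ(A) = (1/n)∑_{i=1}^n (s − n·r_i)² + (1/n)∑_{j=1}^n (s − n·c_j)² with r_i, c_j the row and column sums. -/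
open Matrix BigOperators

/-! Testing the capacity on a permutation `σ` gives `cap(A) ≥ n (∏ᵢ A_{iσ(i)})^{1/n}`, so if
`cap(A) = 0` no permutation is supported by `A` and Hall's theorem yields a zero block `U × W`
with `|U| + |W| > n`. With `xᵢ = n - rᵢ` and `yⱼ = n - cⱼ` we have `Δ(A) = n (‖x‖² + ‖y‖²)`,
both vectors sum to zero, and the mass of `A` outside the block forces
`∑_{i∈U} xᵢ + ∑_{j∈W} yⱼ ≥ n`. Cauchy–Schwarz on a set and on its complement bounds
`‖x‖²` and `‖y‖²` from below by the squares of these partial sums, and a scalar optimisation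
over `|U|, |W|` gives `‖x‖² + ‖y‖² ≥ 2n`. -/

open Finset

theorem mul_sq_add_le_of_mul_sq_le {n p q X Y S T : ℝ} (hn : 0 ≤ n) (hp : 0 ≤ p) (hq : 0 ≤ q)
    (hS : 0 ≤ S) (hT : 0 ≤ T) (hX : n * X ^ 2 ≤ p * S) (hY : n * Y ^ 2 ≤ q * T) :
    n * (X + Y) ^ 2 ≤ (p + q) * (S + T) := by
  have hprod : (n * X * Y) ^ 2 ≤ (p * T) * (q * S) := by
    calc (n * X * Y) ^ 2 = (n * X ^ 2) * (n * Y ^ 2) := by ring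
      _ ≤ (p * S) * (q * T) := mul_le_mul hX hY (by positivity) (by positivity)
      _ = (p * T) * (q * S) := by ring
  have hcross : 2 * (n * X * Y) ≤ p * T + q * S :=
    two_mul_le_add_of_sq_le_mul (by positivity) (by positivity) hprod
  nlinarith

theorem two_mul_add_mul_sub_le {n a b : ℝ} (hab : n + 1 ≤ a + b) :
    2 * (a * (n - a) + b * (n - b)) ≤ n ^ 2 - 1 := by
  -- the left side is at most `2n(a + b) - (a + b)²`, and `(a + b - n)² ≥ 1`
  nlinarith [sq_nonneg (a - b), sq_nonneg (a + b - n - 1)]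

theorem two_mul_le_add_of_sq_le {n a b X Y S T : ℝ} (ha : 0 ≤ a) (han : a ≤ n) (hb : 0 ≤ b)
    (hbn : b ≤ n) (hab : n + 1 ≤ a + b) (hXY : n ≤ X + Y) (hS : 0 ≤ S) (hT : 0 ≤ T)
    (hX : n * X ^ 2 ≤ a * (n - a) * S) (hY : n * Y ^ 2 ≤ b * (n - b) * T) :
    2 * n ≤ S + T := by
  have hn : 1 ≤ n := by linarith
  have hsum := mul_sq_add_le_of_mul_sq_le (by linarith) (by nlinarith) (by nlinarith) hS hT hX hY
  have hcube : n * n ^ 2 ≤ n * (X + Y) ^ 2 := by gcongr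
  have hweights := mul_le_mul_of_nonneg_right (two_mul_add_mul_sub_le hab) (add_nonneg hS hT)
  have hscaled : n ^ 2 * (2 * n) ≤ n ^ 2 * (S + T) := by nlinarith
  exact le_of_mul_le_mul_left hscaled (by positivity)

theorem card_mul_sq_sum_le_of_sum_eq_zero {ι : Type*} [Fintype ι] {z : ι → ℝ}
    (hz : ∑ i, z i = 0) (V : Finset ι) :
    Fintype.card ι * (∑ i ∈ V, z i) ^ 2 ≤ #V * (Fintype.card ι - #V) * ∑ i, z i ^ 2 := by
  classical
  have hV : (∑ i ∈ V, z i) ^ 2 ≤ #V * ∑ i ∈ V, z i ^ 2 := sq_sum_le_card_mul_sum_sq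
  have hVc : (∑ i ∈ V, z i) ^ 2 ≤ (Fintype.card ι - #V) * ∑ i ∈ Vᶜ, z i ^ 2 := by
    have hneg : ∑ i ∈ Vᶜ, z i = -∑ i ∈ V, z i := by
      linarith [sum_add_sum_compl V z]
    have hcard : (#Vᶜ : ℝ) = Fintype.card ι - #V := by
      rw [card_compl, Nat.cast_sub (card_le_univ V)]
    rw [← hcard, ← neg_sq, ← hneg]
    exact sq_sum_le_card_mul_sum_sq
  have hV0 : (0 : ℝ) ≤ #V := by positivity
  have hVn : (#V : ℝ) ≤ Fintype.card ι := by exact_mod_cast card_le_univ V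
  rw [← sum_add_sum_compl V (fun i => z i ^ 2)]
  nlinarith [mul_le_mul_of_nonneg_left hV (sub_nonneg.2 hVn), mul_le_mul_of_nonneg_left hVc hV0]

section Capacity

variable {ι : Type*} [Fintype ι]

theorem prod_perm_mul_prod_le_prod_mulVec {A : Matrix ι ι ℝ} (hA : ∀ i j, 0 ≤ A i j)
    (σ : Equiv.Perm ι) {x : ι → ℝ} (hx : ∀ j, 0 ≤ x j) :
    (∏ i, A i (σ i)) * ∏ j, x j ≤ ∏ i, (A *ᵥ x) i := by
  rw [← Equiv.prod_comp σ x, ← prod_mul_distrib]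
  refine prod_le_prod (fun i _ => mul_nonneg (hA _ _) (hx _)) fun i _ => ?_
  exact single_le_sum (f := fun j => A i j * x j) (fun j _ => mul_nonneg (hA i j) (hx j))
    (mem_univ (σ i))

theorem card_mul_prod_perm_rpow_le_matCap {A : Matrix ι ι ℝ} (hA : ∀ i j, 0 ≤ A i j)
    (σ : Equiv.Perm ι) :
    Fintype.card ι * (∏ i, A i (σ i)) ^ ((1 : ℝ) / Fintype.card ι) ≤ matCap A := by
  refine le_csInf ⟨_, fun _ => 1, fun _ => one_pos, rfl⟩ ?_
  rintro c ⟨x, hx, rfl⟩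
  have hP : 0 ≤ ∏ i, A i (σ i) := prod_nonneg fun i _ => hA i (σ i)
  have hQ : 0 < ∏ j, x j := prod_pos fun j _ => hx j
  rw [le_div_iff₀ (by positivity), mul_assoc, ← Real.mul_rpow hP hQ.le]
  gcongr
  exact prod_perm_mul_prod_le_prod_mulVec hA σ fun j => (hx j).le

theorem exists_zero_block_of_matCap_eq_zero [DecidableEq ι] [Nonempty ι] {A : Matrix ι ι ℝ}
    (hA : ∀ i j, 0 ≤ A i j) (hcap : matCap A = 0) :
    ∃ U W : Finset ι, Fintype.card ι < #U + #W ∧ ∀ i ∈ U, ∀ j ∈ W, A i j = 0 := by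
  set support : ι → Finset ι := fun i => {j | A i j ≠ 0}
  obtain ⟨U, hU⟩ : ∃ U : Finset ι, #(U.biUnion support) < #U := by
    by_contra! hHall
    obtain ⟨f, hf, hfA⟩ := (all_card_le_biUnion_card_iff_exists_injective support).mp hHall
    let σ := Equiv.ofBijective f (Finite.injective_iff_bijective.mp hf)
    have hσ : ∀ i, 0 < A i (σ i) := fun i =>
      (hA i (f i)).lt_of_ne' (by simpa [support] using hfA i)
    have hpos := card_mul_prod_perm_rpow_le_matCap hA σ
    rw [hcap] at hpos
    have : 0 < ∏ i, A i (σ i) := prod_pos fun i _ => hσ i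
    exact hpos.not_gt (by positivity)
  refine ⟨U, (U.biUnion support)ᶜ, by rw [card_compl]; omega, fun i hi j hj => ?_⟩
  by_contra hij
  exact mem_compl.1 hj (mem_biUnion.2 ⟨i, hi, by simpa [support] using hij⟩)

end Capacity

section Sums

variable {ι κ : Type*} [Fintype ι] [Fintype κ]

theorem sum_rowSum_add_sum_colSum_le_matSize {A : Matrix ι κ ℝ} (hA : ∀ i j, 0 ≤ A i j)
    {U : Finset ι} {W : Finset κ} (hblock : ∀ i ∈ U, ∀ j ∈ W, A i j = 0) :
    ∑ i ∈ U, ∑ j, A i j + ∑ j ∈ W, ∑ i, A i j ≤ matSize A := by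
  classical
  have hrows : ∑ i ∈ U, ∑ j, A i j ≤ ∑ j ∈ Wᶜ, ∑ i, A i j :=
    calc ∑ i ∈ U, ∑ j, A i j = ∑ i ∈ U, ∑ j ∈ Wᶜ, A i j := by
          refine sum_congr rfl fun i hi => (sum_subset (subset_univ _) fun j _ hj => ?_).symm
          exact hblock i hi j (by simpa using hj)
      _ = ∑ j ∈ Wᶜ, ∑ i ∈ U, A i j := sum_comm
      _ ≤ ∑ j ∈ Wᶜ, ∑ i, A i j := sum_le_sum fun j _ =>
          sum_le_sum_of_subset_of_nonneg (subset_univ U) fun i _ _ => hA i j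
  have hcols : ∑ j ∈ Wᶜ, ∑ i, A i j + ∑ j ∈ W, ∑ i, A i j = matSize A := by
    rw [sum_compl_add_sum, matSize, sum_comm]
  linarith

theorem inv_mul_sum_sq_sub_mul (m s : ℝ) (r : ι → ℝ) :
    1 / m * ∑ i, (s - m * r i) ^ 2 = m * ∑ i, (s / m - r i) ^ 2 := by
  rcases eq_or_ne m 0 with rfl | hm
  · simp
  · rw [mul_sum, mul_sum]
    refine sum_congr rfl fun i _ => ?_
    field_simp

theorem matDelta_eq (A : Matrix ι κ ℝ) :
    matDelta A = Fintype.card ι * ∑ i, (matSize A / Fintype.card ι - ∑ j, A i j) ^ 2 +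
      Fintype.card κ * ∑ j, (matSize A / Fintype.card κ - ∑ i, A i j) ^ 2 := by
  rw [matDelta, inv_mul_sum_sq_sub_mul, inv_mul_sum_sq_sub_mul]

end Sums

/-- If a nonnegative `n × n` matrix with total entry sum `n ^ 2` has zero capacity,
then `Δ(A) ≥ 2 n ^ 2`. -/
theorem matDelta_ge_of_matCap_eq_zero {n : ℕ} (hn : 0 < n)
    (A : Matrix (Fin n) (Fin n) ℝ) (hA : ∀ i j, 0 ≤ A i j)
    (hs : matSize A = (n : ℝ) ^ 2) (hcap : matCap A = 0) :
    2 * (n : ℝ) ^ 2 ≤ matDelta A := by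
  have : Nonempty (Fin n) := Fin.pos_iff_nonempty.mp hn
  obtain ⟨U, W, hcard, hblock⟩ := exists_zero_block_of_matCap_eq_zero hA hcap
  simp only [Fintype.card_fin] at hcard
  set x : Fin n → ℝ := fun i => n - ∑ j, A i j
  set y : Fin n → ℝ := fun j => n - ∑ i, A i j
  have hxy : ∑ i, x i = 0 ∧ ∑ j, y j = 0 := by
    have hrows : ∑ i, ∑ j, A i j = (n : ℝ) ^ 2 := hs
    have hcols : ∑ j, ∑ i, A i j = (n : ℝ) ^ 2 := by rw [sum_comm, ← hs, matSize]
    simp only [x, y, sum_sub_distrib, sum_const, card_univ, Fintype.card_fin, nsmul_eq_mul,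
      hrows, hcols]
    constructor <;> ring
  have hXY : (n : ℝ) ≤ ∑ i ∈ U, x i + ∑ j ∈ W, y j := by
    have hmass := sum_rowSum_add_sum_colSum_le_matSize hA hblock
    have hcard' : (n : ℝ) + 1 ≤ #U + #W := by exact_mod_cast hcard
    simp only [x, y, sum_sub_distrib, sum_const, nsmul_eq_mul]
    nlinarith
  have hX := card_mul_sq_sum_le_of_sum_eq_zero hxy.1 U
  have hY := card_mul_sq_sum_le_of_sum_eq_zero hxy.2 W
  simp only [Fintype.card_fin] at hX hY
  have hU : (#U : ℝ) ≤ n := by exact_mod_cast (card_le_univ U).trans_eq (Fintype.card_fin n)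
  have hW : (#W : ℝ) ≤ n := by exact_mod_cast (card_le_univ W).trans_eq (Fintype.card_fin n)
  have hsq : 2 * (n : ℝ) ≤ ∑ i, x i ^ 2 + ∑ j, y j ^ 2 :=
    two_mul_le_add_of_sq_le (by positivity) hU (by positivity) hW (by exact_mod_cast hcard) hXY
      (sum_nonneg fun _ _ => sq_nonneg _) (sum_nonneg fun _ _ => sq_nonneg _) hX hY
  have hnn : (n : ℝ) ^ 2 / n = n := by field_simp
  rw [matDelta_eq, hs, Fintype.card_fin, hnn]
  nlinarith
end

section
/- For any nonnegative matrix A ∈ ℝ^{n×n} with s = ∑_{ij} A_{ij}, the capacity satisfies cap(A) ≥ s − n·√(Δ(A)/2). -/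
open Matrix BigOperators

/-!
Put `m = s/n - √(Δ/2)`; if `m ≤ 0` there is nothing to prove, as `cap A ≥ 0`. Otherwise the heart
of the proof is a matrix `W` with `0 ≤ W ≤ A` whose row and column sums all equal `m` (the doubly
balanced part of `A`). By the supply–demand theorem for bipartite transportation, `W` exists as
soon as `m |C| ≤ m |R| + A(Rᶜ, C)` for all sets of rows `R` and columns `C`. Multiplied by `n`,
this reduces to `∑_C v - ∑_R u ≤ n √(Δ/2)` for the row and column deviations `uᵢ = s - n rᵢ`,
`vⱼ = s - n cⱼ`; both sum to zero, so Cauchy–Schwarz bounds their partial sums. Finally, weighted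
AM–GM with weights `Wᵢⱼ / m`, applied row by row, gives `∏ᵢ (A x)ᵢ ≥ ∏ᵢ (W x)ᵢ ≥ mⁿ ∏ⱼ xⱼ`, that
is `cap A ≥ n m`.

The supply–demand theorem is proved by a max-flow argument: take a feasible `W` of maximal size.
If a column with slack were reachable in the residual network from a row with slack, `W` could be
augmented along the path; so the reachable rows and columns form a cut whose capacity is the size
of `W`.
-/

open Finset

section General

variable {ι κ : Type*}

lemma sum_add_mul_sub {α : Type*} (s : Finset α) (f g : α → ℝ) (t : ℝ) :
    ∑ x ∈ s, (f x + t * (g x - f x)) = ∑ x ∈ s, f x + t * (∑ x ∈ s, g x - ∑ x ∈ s, f x) := by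
  rw [sum_add_distrib, ← mul_sum, sum_sub_distrib]

lemma eq_of_forall_le_of_sum_le [Fintype ι] {f g : ι → ℝ} (h : ∀ i, f i ≤ g i)
    (hsum : ∑ i, g i ≤ ∑ i, f i) (i : ι) : f i = g i :=
  (sum_eq_sum_iff_of_le fun i _ => h i).1 ((sum_le_sum fun i _ => h i).antisymm hsum) i (mem_univ i)

theorem four_mul_sq_sum_le_card_mul_sum_sq [Fintype ι] [DecidableEq ι] {d : ι → ℝ}
    (hd : ∑ i, d i = 0) (R : Finset ι) :
    4 * (∑ i ∈ R, d i) ^ 2 ≤ Fintype.card ι * ∑ i, d i ^ 2 := by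
  -- with signs `σ = ±1` on `R` and `Rᶜ`, `2 ∑_R d = ∑ σ d`: apply Cauchy–Schwarz
  set σ : ι → ℝ := fun i => if i ∈ R then 1 else -1
  have hsigned : ∑ i, σ i * d i = ∑ i ∈ R, d i - ∑ i ∈ Rᶜ, d i := by
    rw [← sum_add_sum_compl R, sub_eq_add_neg, ← sum_neg_distrib]
    congr 1 <;> refine sum_congr rfl fun i hi => ?_ <;> simp_all [σ]
  have hcompl : ∑ i ∈ Rᶜ, d i = -∑ i ∈ R, d i := by linarith [sum_add_sum_compl R d]
  calc 4 * (∑ i ∈ R, d i) ^ 2 = (∑ i, σ i * d i) ^ 2 := by rw [hsigned, hcompl]; ring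
    _ ≤ (∑ i, σ i ^ 2) * ∑ i, d i ^ 2 := sum_mul_sq_le_sq_mul_sq _ _ _
    _ = Fintype.card ι * ∑ i, d i ^ 2 := by simp [σ, apply_ite (· ^ 2)]

lemma sum_col_le_sum_row_add_sum [Fintype ι] [DecidableEq ι] [Fintype κ] {A : Matrix ι κ ℝ}
    (hA : ∀ i j, 0 ≤ A i j) (R : Finset ι) (C : Finset κ) :
    ∑ j ∈ C, ∑ i, A i j ≤ ∑ i ∈ R, ∑ j, A i j + ∑ i ∈ Rᶜ, ∑ j ∈ C, A i j := by
  rw [sum_comm, ← sum_add_sum_compl R]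
  exact add_le_add (sum_le_sum fun i _ =>
    sum_le_sum_of_subset_of_nonneg (subset_univ C) fun j _ _ => hA i j) le_rfl

lemma continuous_matSize [Fintype ι] [Fintype κ] : Continuous (matSize : Matrix ι κ ℝ → ℝ) := by
  unfold matSize
  fun_prop

lemma matSize_eq_sum_col [Fintype ι] [Fintype κ] (W : Matrix ι κ ℝ) :
    matSize W = ∑ j, ∑ i, W i j :=
  sum_comm

lemma mulVec_nonneg [Fintype κ] {A : Matrix ι κ ℝ} (hA : ∀ i j, 0 ≤ A i j) {x : κ → ℝ}
    (hx : ∀ j, 0 ≤ x j) (i : ι) : 0 ≤ (A *ᵥ x) i :=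
  sum_nonneg fun j _ => mul_nonneg (hA i j) (hx j)

lemma mulVec_le_mulVec [Fintype κ] {A B : Matrix ι κ ℝ} (hAB : ∀ i j, A i j ≤ B i j) {x : κ → ℝ}
    (hx : ∀ j, 0 ≤ x j) (i : ι) : (A *ᵥ x) i ≤ (B *ᵥ x) i :=
  sum_le_sum fun j _ => mul_le_mul_of_nonneg_right (hAB i j) (hx j)

end General

namespace Transport

variable {ι κ : Type*}

lemma sum_row_add_single [Fintype κ] [DecidableEq ι] [DecidableEq κ] (W : Matrix ι κ ℝ) (i a : ι)
    (j : κ) (δ : ℝ) : ∑ b, (W + single i j δ) a b = ∑ b, W a b + if i = a then δ else 0 := by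
  simp [sum_add_distrib, single_apply, ite_and]

lemma sum_col_add_single [Fintype ι] [DecidableEq ι] [DecidableEq κ] (W : Matrix ι κ ℝ) (i : ι)
    (j b : κ) (δ : ℝ) : ∑ a, (W + single i j δ) a b = ∑ a, W a b + if j = b then δ else 0 := by
  simp [sum_add_distrib, single_apply, ite_and]

lemma sum_col_add_smul_sub [Fintype ι] (W W' : Matrix ι κ ℝ) (t : ℝ) (b : κ) :
    ∑ a, (W + t • (W' - W)) a b = ∑ a, W a b + t * (∑ a, W' a b - ∑ a, W a b) :=
  sum_add_mul_sub _ _ _ _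

section RowFeasible

variable [Fintype κ]

structure RowFeasible (A : Matrix ι κ ℝ) (r : ι → ℝ) (W : Matrix ι κ ℝ) : Prop where
  nonneg : ∀ i j, 0 ≤ W i j
  le : ∀ i j, W i j ≤ A i j
  row_le : ∀ i, ∑ j, W i j ≤ r i

variable {A : Matrix ι κ ℝ} {r : ι → ℝ}

lemma RowFeasible.add_smul_sub {W W' : Matrix ι κ ℝ} (hW : RowFeasible A r W)
    (hW' : RowFeasible A r W') {t : ℝ} (ht₀ : 0 ≤ t) (ht₁ : t ≤ 1) :
    RowFeasible A r (W + t • (W' - W)) where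
  nonneg i j := by
    change 0 ≤ W i j + t * (W' i j - W i j)
    nlinarith [hW.nonneg i j, hW'.nonneg i j]
  le i j := by
    change W i j + t * (W' i j - W i j) ≤ A i j
    nlinarith [hW.le i j, hW'.le i j]
  row_le i := by
    change ∑ j, (W i j + t * (W' i j - W i j)) ≤ r i
    rw [sum_add_mul_sub]
    nlinarith [hW.row_le i, hW'.row_le i]

lemma RowFeasible.add_single [DecidableEq ι] [DecidableEq κ] {V : Matrix ι κ ℝ}
    (hV : RowFeasible A r V) {i : ι} {j : κ} {δ : ℝ} (h₀ : 0 ≤ V i j + δ) (h₁ : V i j + δ ≤ A i j)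
    (hrow : ∑ b, V i b + δ ≤ r i) : RowFeasible A r (V + single i j δ) where
  nonneg a b := by
    by_cases h : i = a ∧ j = b
    · obtain ⟨rfl, rfl⟩ := h; simpa using h₀
    · simpa [single_apply, h] using hV.nonneg a b
  le a b := by
    by_cases h : i = a ∧ j = b
    · obtain ⟨rfl, rfl⟩ := h; simpa using h₁
    · simpa [single_apply, h] using hV.le a b
  row_le a := by
    rw [sum_row_add_single]
    split_ifs with h
    · exact h ▸ hrow
    · simpa using hV.row_le a

end RowFeasible

variable [Fintype ι] [Fintype κ] {A : Matrix ι κ ℝ} {r : ι → ℝ} {c : κ → ℝ}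

-- partial augmenting paths of `W`, ending at row `i` resp. at column `j`
variable (A r) in
def RowSlackable (W : Matrix ι κ ℝ) (i : ι) : Prop :=
  ∃ W', RowFeasible A r W' ∧ (∀ b, ∑ a, W' a b = ∑ a, W a b) ∧ ∑ b, W' i b < r i

variable (A r) in
def ColRaisable (W : Matrix ι κ ℝ) (j : κ) : Prop :=
  ∃ W', RowFeasible A r W' ∧ (∀ b ≠ j, ∑ a, W' a b = ∑ a, W a b) ∧ ∑ a, W a j < ∑ a, W' a j

lemma RowSlackable.colRaisable {W : Matrix ι κ ℝ} (hW : RowFeasible A r W) {i : ι} {j : κ}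
    (h : RowSlackable A r W i) (hij : W i j < A i j) : ColRaisable A r W j := by
  classical
  obtain ⟨W', hW', hcol, hrow⟩ := h
  set V := W + (1 / 2 : ℝ) • (W' - W)
  have hV : RowFeasible A r V := hW.add_smul_sub hW' (by norm_num) (by norm_num)
  have hVcol : ∀ b, ∑ a, V a b = ∑ a, W a b := fun b => by
    rw [sum_col_add_smul_sub, hcol, sub_self, mul_zero, add_zero]
  have hVij : V i j < A i j := by
    change W i j + 1 / 2 * (W' i j - W i j) < A i j
    linarith [hW'.le i j]
  have hVi : ∑ b, V i b < r i := by
    change ∑ b, (W i b + 1 / 2 * (W' i b - W i b)) < r i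
    rw [sum_add_mul_sub]
    linarith [hW.row_le i]
  set δ := min (A i j - V i j) (r i - ∑ b, V i b)
  have hδ : 0 < δ := lt_min (by linarith) (by linarith)
  refine ⟨V + single i j δ, hV.add_single (by linarith [hV.nonneg i j])
    (by linarith [min_le_left (A i j - V i j) (r i - ∑ b, V i b)])
    (by linarith [min_le_right (A i j - V i j) (r i - ∑ b, V i b)]), fun b hb => ?_, ?_⟩
  · rw [sum_col_add_single, if_neg hb.symm, add_zero, hVcol]
  · rw [sum_col_add_single, if_pos rfl, hVcol]
    linarith

lemma ColRaisable.rowSlackable {W : Matrix ι κ ℝ} (hW : RowFeasible A r W) {i : ι} {j : κ}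
    (h : ColRaisable A r W j) (hij : 0 < W i j) : RowSlackable A r W i := by
  classical
  obtain ⟨W', hW', hcol, hraise⟩ := h
  set γ := ∑ a, W' a j - ∑ a, W a j
  have hγ : 0 < γ := sub_pos.2 hraise
  -- `t` is chosen so that the column `j` gains exactly as much as entry `(i, j)` can give back
  set t := W i j / (γ + W i j)
  have ht₀ : 0 < t := by positivity
  have ht₁ : t ≤ 1 := (div_le_one (by positivity)).2 (by linarith)
  have htγ : t * γ = (1 - t) * W i j := by
    simp only [t]; field_simp; ring
  set V := W + t • (W' - W)
  have hV : RowFeasible A r V := hW.add_smul_sub hW' ht₀.le ht₁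
  have hVij : V i j = W i j + t * (W' i j - W i j) := rfl
  refine ⟨V + single i j (-(t * γ)), hV.add_single ?_ ?_ ?_, fun b => ?_, ?_⟩
  · rw [hVij]; nlinarith [hW'.nonneg i j]
  · linarith [hV.le i j, mul_pos ht₀ hγ]
  · linarith [hV.row_le i, mul_pos ht₀ hγ]
  · rw [sum_col_add_single, sum_col_add_smul_sub]
    by_cases hb : b = j
    · subst hb; simp only [if_true]; ring
    · rw [if_neg (Ne.symm hb), hcol b hb]; ring
  · rw [sum_row_add_single, if_pos rfl]
    linarith [hV.row_le i, mul_pos ht₀ hγ]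

variable (A r) in
/-- Vertices reachable in the residual network of `W` from the rows where `W` leaves slack. -/
inductive Reachable (W : Matrix ι κ ℝ) : ι ⊕ κ → Prop
  | slack {i : ι} : ∑ j, W i j < r i → Reachable W (.inl i)
  | forward {i : ι} {j : κ} : Reachable W (.inl i) → W i j < A i j → Reachable W (.inr j)
  | backward {i : ι} {j : κ} : Reachable W (.inr j) → 0 < W i j → Reachable W (.inl i)

lemma Reachable.slackable_or_raisable {W : Matrix ι κ ℝ} (hW : RowFeasible A r W) {v : ι ⊕ κ}
    (h : Reachable A r W v) : Sum.elim (RowSlackable A r W) (ColRaisable A r W) v := by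
  induction h with
  | slack hi => exact ⟨W, hW, fun _ => rfl, hi⟩
  | forward _ hij ih => exact RowSlackable.colRaisable hW ih hij
  | backward _ hij ih => exact ColRaisable.rowSlackable hW ih hij

variable (A r c) in
def Feasible : Set (Matrix ι κ ℝ) :=
  {W | RowFeasible A r W ∧ ∀ j, ∑ i, W i j ≤ c j}

lemma isCompact_feasible : IsCompact (Feasible A r c) := by
  have hclosed : IsClosed {W : Matrix ι κ ℝ | ((∀ i j, 0 ≤ W i j) ∧ (∀ i j, W i j ≤ A i j) ∧
      ∀ i, ∑ j, W i j ≤ r i) ∧ ∀ j, ∑ i, W i j ≤ c j} := by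
    simp only [Set.ofPred_and, Set.ofPred_forall]
    refine .inter (.inter ?_ (.inter ?_ ?_)) ?_
    · exact isClosed_iInter fun _ => isClosed_iInter fun _ => isClosed_le continuous_const (by fun_prop)
    · exact isClosed_iInter fun _ => isClosed_iInter fun _ => isClosed_le (by fun_prop) continuous_const
    · exact isClosed_iInter fun _ => isClosed_le (by fun_prop) (by fun_prop)
    · exact isClosed_iInter fun _ => isClosed_le (by fun_prop) (by fun_prop)
  have hfeas : Feasible A r c = {W : Matrix ι κ ℝ | ((∀ i j, 0 ≤ W i j) ∧ (∀ i j, W i j ≤ A i j) ∧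
      ∀ i, ∑ j, W i j ≤ r i) ∧ ∀ j, ∑ i, W i j ≤ c j} :=
    Set.ext fun _ => ⟨fun ⟨⟨h₀, h₁, h₂⟩, h₃⟩ => ⟨⟨h₀, h₁, h₂⟩, h₃⟩,
      fun ⟨⟨h₀, h₁, h₂⟩, h₃⟩ => ⟨⟨h₀, h₁, h₂⟩, h₃⟩⟩
  exact (isCompact_Icc (a := (0 : ι → κ → ℝ)) (b := A)).of_isClosed_subset (hfeas ▸ hclosed)
    fun W hW => ⟨hW.1.nonneg, hW.1.le⟩

lemma ColRaisable.le_of_isMaxOn {W : Matrix ι κ ℝ} (hW : W ∈ Feasible A r c)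
    (hmax : IsMaxOn matSize (Feasible A r c) W) {j : κ} (h : ColRaisable A r W j) :
    c j ≤ ∑ i, W i j := by
  classical
  by_contra! hlt
  obtain ⟨W', hW', hcol, hraise⟩ := h
  set γ := ∑ a, W' a j - ∑ a, W a j
  have hγ : 0 < γ := sub_pos.2 hraise
  set t := (c j - ∑ i, W i j) / (c j - ∑ i, W i j + γ)
  have ht₀ : 0 < t := div_pos (by linarith) (by linarith)
  have ht₁ : t ≤ 1 := (div_le_one (by linarith)).2 (by linarith)
  have htγ : t * γ ≤ c j - ∑ i, W i j := by
    rw [div_mul_eq_mul_div, div_le_iff₀ (by linarith)]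
    nlinarith
  have hdiff : ∑ b, (∑ a, W' a b - ∑ a, W a b) = γ :=
    sum_eq_single j (fun b _ hb => by rw [hcol b hb, sub_self]) (by simp)
  have hV : W + t • (W' - W) ∈ Feasible A r c := by
    refine ⟨hW.1.add_smul_sub hW' ht₀.le ht₁, fun b => ?_⟩
    rw [sum_col_add_smul_sub]
    by_cases hb : b = j
    · subst hb; linarith
    · rw [hcol b hb, sub_self, mul_zero, add_zero]; exact hW.2 b
  have hsize : matSize (W + t • (W' - W)) = matSize W + t * γ := by
    rw [matSize_eq_sum_col, matSize_eq_sum_col]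
    simp only [sum_col_add_smul_sub, sum_add_distrib, ← mul_sum, hdiff]
  have := hmax hV
  rw [Set.mem_ofPred_eq, hsize] at this
  nlinarith

lemma matSize_eq_of_tight [DecidableEq ι] [DecidableEq κ] {W : Matrix ι κ ℝ} (R : Finset ι)
    (C : Finset κ) (hrow : ∀ i ∉ R, ∑ j, W i j = r i) (hsat : ∀ i ∈ R, ∀ j ∉ C, W i j = A i j)
    (hzero : ∀ i ∉ R, ∀ j ∈ C, W i j = 0) (hcol : ∀ j ∈ C, ∑ i, W i j = c j) :
    matSize W = ∑ i ∈ Rᶜ, r i + ∑ j ∈ C, c j + ∑ i ∈ R, ∑ j ∈ Cᶜ, A i j := by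
  have hRC : ∑ i ∈ R, ∑ j ∈ C, W i j = ∑ j ∈ C, c j := by
    rw [sum_comm (f := fun i j => W i j)]
    refine sum_congr rfl fun j hj => ?_
    rw [← hcol j hj, ← sum_add_sum_compl R, sum_eq_zero fun i hi => hzero i (mem_compl.1 hi) j hj,
      add_zero]
  have hRCc : ∑ i ∈ R, ∑ j ∈ Cᶜ, W i j = ∑ i ∈ R, ∑ j ∈ Cᶜ, A i j :=
    sum_congr rfl fun i hi => sum_congr rfl fun j hj => hsat i hi j (mem_compl.1 hj)
  rw [matSize, ← sum_compl_add_sum R, sum_congr rfl fun i hi => hrow i (mem_compl.1 hi)]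
  simp only [← sum_add_sum_compl C (W _), sum_add_distrib, hRC, hRCc]
  ring

lemma exists_matSize_eq_of_isMaxOn [DecidableEq ι] [DecidableEq κ] {W : Matrix ι κ ℝ}
    (hW : W ∈ Feasible A r c) (hmax : IsMaxOn matSize (Feasible A r c) W) :
    ∃ (R : Finset ι) (C : Finset κ),
      matSize W = ∑ i ∈ Rᶜ, r i + ∑ j ∈ C, c j + ∑ i ∈ R, ∑ j ∈ Cᶜ, A i j := by
  classical
  set R := univ.filter fun i => Reachable A r W (.inl i)
  set C := univ.filter fun j => Reachable A r W (.inr j)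
  have hR (i) : i ∈ R ↔ Reachable A r W (.inl i) := by simp [R]
  have hC (j) : j ∈ C ↔ Reachable A r W (.inr j) := by simp [C]
  refine ⟨R, C, matSize_eq_of_tight R C ?_ ?_ ?_ ?_⟩
  · exact fun i hi => (hW.1.row_le i).antisymm <| not_lt.1 fun h => hi <| (hR i).2 (.slack h)
  · exact fun i hi j hj => (hW.1.le i j).antisymm <| not_lt.1 fun h => hj <| (hC j).2 <|
      .forward ((hR i).1 hi) h
  · exact fun i hi j hj => (hW.1.nonneg i j).antisymm' <| not_lt.1 fun h => hi <| (hR i).2 <|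
      .backward ((hC j).1 hj) h
  · exact fun j hj => (hW.2 j).antisymm <| ColRaisable.le_of_isMaxOn hW hmax <|
      ((hC j).1 hj).slackable_or_raisable hW.1

variable (A r c) in
theorem exists_sum_eq_of_cut [DecidableEq ι] (hA : ∀ i j, 0 ≤ A i j) (hc : ∀ j, 0 ≤ c j)
    (hsum : ∑ i, r i = ∑ j, c j) (hcut : ∀ (R : Finset ι) (C : Finset κ),
      ∑ j ∈ C, c j ≤ ∑ i ∈ R, r i + ∑ i ∈ Rᶜ, ∑ j ∈ C, A i j) :
    ∃ W : Matrix ι κ ℝ, (∀ i j, 0 ≤ W i j) ∧ (∀ i j, W i j ≤ A i j) ∧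
      (∀ i, ∑ j, W i j = r i) ∧ (∀ j, ∑ i, W i j = c j) := by
  classical
  have h0 : (0 : Matrix ι κ ℝ) ∈ Feasible A r c :=
    ⟨⟨fun _ _ => le_rfl, hA, fun i => by simpa using hcut {i} ∅⟩, by simpa using hc⟩
  obtain ⟨W, hW, hmax⟩ :=
    isCompact_feasible.exists_isMaxOn ⟨0, h0⟩ continuous_matSize.continuousOn
  obtain ⟨R, C, hsize⟩ := exists_matSize_eq_of_isMaxOn hW hmax
  have hcols : ∀ j, ∑ i, W i j = c j := by
    refine eq_of_forall_le_of_sum_le hW.2 ?_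
    have := hcut Rᶜ Cᶜ
    rw [compl_compl] at this
    rw [← matSize_eq_sum_col, hsize, ← sum_add_sum_compl C c]
    linarith
  have hrows : ∀ i, ∑ j, W i j = r i := by
    refine eq_of_forall_le_of_sum_le hW.1.row_le ?_
    rw [hsum, ← matSize, matSize_eq_sum_col, sum_congr rfl fun j _ => hcols j]
  exact ⟨W, hW.1.nonneg, hW.1.le, hrows, hcols⟩

end Transport

section Square

variable {ι : Type*} [Fintype ι] [DecidableEq ι]

theorem sum_sub_sum_le_card_mul_sqrt_matDelta (A : Matrix ι ι ℝ) (R C : Finset ι) :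
    ∑ j ∈ C, (matSize A - Fintype.card ι * ∑ i, A i j) -
      ∑ i ∈ R, (matSize A - Fintype.card ι * ∑ j, A i j) ≤
      Fintype.card ι * √(matDelta A / 2) := by
  rcases isEmpty_or_nonempty ι with hι | hι
  · simp [eq_empty_of_isEmpty]
  set n : ℝ := (Fintype.card ι : ℝ)
  have hn : 0 < n := Nat.cast_pos.2 Fintype.card_pos
  set u : ι → ℝ := fun i => matSize A - n * ∑ j, A i j
  set v : ι → ℝ := fun j => matSize A - n * ∑ i, A i j
  have hu : ∑ i, u i = 0 := by
    simp [u, sum_sub_distrib, ← mul_sum, matSize, n]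
  have hv : ∑ j, v j = 0 := by
    simp only [v, sum_sub_distrib, ← mul_sum, sum_const, card_univ, nsmul_eq_mul]
    rw [sum_comm]
    simp [matSize, n]
  have hΔ : n * matDelta A = ∑ i, u i ^ 2 + ∑ j, v j ^ 2 := by
    have : (Fintype.card ι : ℝ) ≠ 0 := hn.ne'
    simp only [matDelta, u, v, n]
    field_simp
  have hU := four_mul_sq_sum_le_card_mul_sum_sq hu R
  have hV := four_mul_sq_sum_le_card_mul_sum_sq hv C
  have hsq : (∑ j ∈ C, v j - ∑ i ∈ R, u i) ^ 2 ≤ n ^ 2 * (matDelta A / 2) := by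
    nlinarith [sq_nonneg (∑ j ∈ C, v j + ∑ i ∈ R, u i)]
  calc _ ≤ |∑ j ∈ C, v j - ∑ i ∈ R, u i| := le_abs_self _
    _ ≤ √(n ^ 2 * (matDelta A / 2)) := Real.abs_le_sqrt hsq
    _ = n * √(matDelta A / 2) := by rw [Real.sqrt_mul (sq_nonneg n), Real.sqrt_sq hn.le]

theorem card_mul_le_card_mul_add_sum_compl {A : Matrix ι ι ℝ}
    (hA : ∀ i j, 0 ≤ A i j) {m : ℝ} (hm₀ : 0 ≤ m)
    (hm : Fintype.card ι * m ≤ matSize A - Fintype.card ι * √(matDelta A / 2))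
    (R C : Finset ι) : #C * m ≤ #R * m + ∑ i ∈ Rᶜ, ∑ j ∈ C, A i j := by
  have hblock := sum_col_le_sum_row_add_sum hA R C
  rcases le_or_gt #C #R with hCR | hRC
  · have : (#C : ℝ) ≤ #R := by exact_mod_cast hCR
    nlinarith [sum_nonneg fun i (_ : i ∈ Rᶜ) => sum_nonneg fun j (_ : j ∈ C) => hA i j]
  set n : ℝ := (Fintype.card ι : ℝ)
  have hn : 0 < n := Nat.cast_pos.2 ((Nat.zero_le _).trans_lt (hRC.trans_le (card_le_univ C)))
  have hdev := sum_sub_sum_le_card_mul_sqrt_matDelta A R C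
  simp only [sum_sub_distrib, sum_const, nsmul_eq_mul, ← mul_sum] at hdev
  have hk : (#R : ℝ) + 1 ≤ #C := by exact_mod_cast hRC
  -- `n (#C - #R) m ≤ (#C - #R) s - n √(Δ/2) ≤ n (∑_C cols - ∑_R rows) ≤ n A(Rᶜ, C)`
  have h₁ : (#C - #R) * (n * m) ≤ (#C - #R) * (matSize A - n * √(matDelta A / 2)) :=
    mul_le_mul_of_nonneg_left hm (by linarith)
  have h₂ : 0 ≤ (#C - #R - 1) * (n * √(matDelta A / 2)) :=
    mul_nonneg (by linarith) (mul_nonneg hn.le (Real.sqrt_nonneg _))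
  have h₃ := mul_le_mul_of_nonneg_left hblock hn.le
  exact le_of_mul_le_mul_left (by linarith) hn

end Square

section Capacity

variable {ι κ : Type*} [Fintype ι] [Fintype κ]

lemma le_matCap {A : Matrix ι κ ℝ} {b : ℝ}
    (h : ∀ x : κ → ℝ, (∀ j, 0 < x j) → b ≤ Fintype.card ι *
      (∏ i, (A *ᵥ x) i) ^ ((1 : ℝ) / Fintype.card ι) / (∏ j, x j) ^ ((1 : ℝ) / Fintype.card κ)) :
    b ≤ matCap A :=
  le_csInf ⟨_, fun _ => 1, fun _ => one_pos, rfl⟩ fun _ ⟨x, hx, hb⟩ => hb ▸ h x hx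

lemma matCap_nonneg {A : Matrix ι κ ℝ} (hA : ∀ i j, 0 ≤ A i j) : 0 ≤ matCap A :=
  le_matCap fun _ hx => div_nonneg
    (mul_nonneg (Nat.cast_nonneg _) (Real.rpow_nonneg
      (prod_nonneg fun i _ => mulVec_nonneg hA (fun j => (hx j).le) i) _))
    (Real.rpow_nonneg (prod_nonneg fun j _ => (hx j).le) _)

theorem pow_card_mul_prod_le_prod_mulVec {W : Matrix ι κ ℝ} {m : ℝ} (hm : 0 < m)
    (hW : ∀ i j, 0 ≤ W i j) (hrow : ∀ i, ∑ j, W i j = m) (hcol : ∀ j, ∑ i, W i j = m)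
    {x : κ → ℝ} (hx : ∀ j, 0 < x j) : m ^ Fintype.card ι * ∏ j, x j ≤ ∏ i, (W *ᵥ x) i := by
  have hrowAMGM (i : ι) : m * ∏ j, x j ^ (W i j / m) ≤ (W *ᵥ x) i := by
    have hgm := Real.geom_mean_le_arith_mean_weighted univ (fun j => W i j / m) x
      (fun j _ => div_nonneg (hW i j) hm.le) (by rw [← sum_div, hrow i, div_self hm.ne'])
      (fun j _ => (hx j).le)
    calc m * ∏ j, x j ^ (W i j / m) ≤ m * ∑ j, W i j / m * x j :=
          mul_le_mul_of_nonneg_left hgm hm.le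
      _ = (W *ᵥ x) i := by
          rw [mul_sum]
          exact sum_congr rfl fun j _ => by field_simp
  calc m ^ Fintype.card ι * ∏ j, x j = ∏ i, (m * ∏ j, x j ^ (W i j / m)) := by
        rw [prod_mul_distrib, prod_const, card_univ, prod_comm]
        congr 1
        refine prod_congr rfl fun j _ => ?_
        rw [← Real.rpow_sum_of_pos (hx j), ← sum_div, hcol j, div_self hm.ne', Real.rpow_one]
    _ ≤ ∏ i, (W *ᵥ x) i := prod_le_prod
        (fun i _ => mul_nonneg hm.le (prod_nonneg fun j _ => Real.rpow_nonneg (hx j).le _))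
        fun i _ => hrowAMGM i

theorem card_mul_le_matCap [Nonempty ι] {A W : Matrix ι ι ℝ} {m : ℝ} (hm : 0 < m)
    (hW : ∀ i j, 0 ≤ W i j) (hWA : ∀ i j, W i j ≤ A i j) (hrow : ∀ i, ∑ j, W i j = m)
    (hcol : ∀ j, ∑ i, W i j = m) : Fintype.card ι * m ≤ matCap A := by
  refine le_matCap fun x hx => ?_
  have hn : (0 : ℝ) < Fintype.card ι := Nat.cast_pos.2 Fintype.card_pos
  have hx₀ : 0 ≤ ∏ j, x j := prod_nonneg fun j _ => (hx j).le
  have hprod : m ^ Fintype.card ι * ∏ j, x j ≤ ∏ i, (A *ᵥ x) i :=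
    (pow_card_mul_prod_le_prod_mulVec hm hW hrow hcol hx).trans <| prod_le_prod
      (fun i _ => mulVec_nonneg hW (fun j => (hx j).le) i)
      fun i _ => mulVec_le_mulVec hWA (fun j => (hx j).le) i
  have hroot : m * (∏ j, x j) ^ ((1 : ℝ) / Fintype.card ι) ≤
      (∏ i, (A *ᵥ x) i) ^ ((1 : ℝ) / Fintype.card ι) :=
    calc m * (∏ j, x j) ^ ((1 : ℝ) / Fintype.card ι)
        = (m ^ Fintype.card ι * ∏ j, x j) ^ ((1 : ℝ) / Fintype.card ι) := by
          rw [Real.mul_rpow (by positivity) hx₀, ← Real.rpow_natCast, ← Real.rpow_mul hm.le,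
            mul_one_div_cancel hn.ne', Real.rpow_one]
      _ ≤ _ := Real.rpow_le_rpow (by positivity) hprod (by positivity)
  rw [le_div_iff₀ (Real.rpow_pos_of_pos (prod_pos fun j _ => hx j) _), mul_assoc]
  exact mul_le_mul_of_nonneg_left hroot hn.le

end Capacity

/-- Capacity lower bound for square nonnegative matrices: `cap(A) ≥ s - n √(Δ(A)/2)`. -/
theorem matCap_ge_square {n : ℕ} (hn : 0 < n)
    (A : Matrix (Fin n) (Fin n) ℝ) (hA : ∀ i j, 0 ≤ A i j) :
    matSize A - (n : ℝ) * Real.sqrt (matDelta A / 2) ≤ matCap A := by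
  set m := (matSize A - n * √(matDelta A / 2)) / n
  have hnm : n * m = matSize A - n * √(matDelta A / 2) := by
    have : (n : ℝ) ≠ 0 := by positivity
    simp only [m]
    field_simp
  rw [← hnm]
  rcases le_or_gt m 0 with hm | hm
  · exact (mul_nonpos_of_nonneg_of_nonpos n.cast_nonneg hm).trans (matCap_nonneg hA)
  have hcut (R C : Finset (Fin n)) := card_mul_le_card_mul_add_sum_compl hA hm.le
    (by simpa using hnm.le) R C
  obtain ⟨W, hW, hWA, hrow, hcol⟩ := Transport.exists_sum_eq_of_cut A (fun _ => m) (fun _ => m)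
    hA (fun _ => hm.le) rfl (by simpa using hcut)
  have : NeZero n := ⟨hn.ne'⟩
  simpa using card_mul_le_matCap hm hW hWA hrow hcol
end

section
/- For any two nonnegative rectangular matrices A ∈ ℝ^{m×n} and C ∈ ℝ^{p×q}, the capacity of the tensor product satisfies cap(A ⊗ C) ≤ cap(A)·cap(C). -/
open Matrix BigOperators

open scoped Kronecker

/-- Auxiliary: the set whose infimum is `matCap`. -/
def capSet {ι κ : Type*} [Fintype ι] [Fintype κ] (A : Matrix ι κ ℝ) : Set ℝ :=
  {c : ℝ | ∃ x : κ → ℝ, (∀ j, 0 < x j) ∧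
    c = (Fintype.card ι : ℝ) * (∏ i, A.mulVec x i) ^ ((1 : ℝ) / (Fintype.card ι : ℝ)) /
        (∏ j, x j) ^ ((1 : ℝ) / (Fintype.card κ : ℝ))}

lemma matCap_eq_sInf_capSet {ι κ : Type*} [Fintype ι] [Fintype κ] (A : Matrix ι κ ℝ) :
    matCap A = sInf (capSet A) := rfl

lemma capSet_nonempty {ι κ : Type*} [Fintype ι] [Fintype κ] (A : Matrix ι κ ℝ) :
    (capSet A).Nonempty :=
  ⟨_, fun _ => 1, fun _ => one_pos, rfl⟩

lemma capSet_nonneg {ι κ : Type*} [Fintype ι] [Fintype κ] (A : Matrix ι κ ℝ)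
    (hA : ∀ i j, 0 ≤ A i j) : ∀ c ∈ capSet A, 0 ≤ c := by
  rintro c ⟨x, hx, rfl⟩
  have h1 : (0:ℝ) ≤ ∏ i, A.mulVec x i := by
    refine Finset.prod_nonneg fun i _ => Finset.sum_nonneg fun j _ => ?_
    exact mul_nonneg (hA i j) (hx j).le
  have h2 : (0:ℝ) ≤ ∏ j, x j := Finset.prod_nonneg fun j _ => (hx j).le
  exact div_nonneg (mul_nonneg (by positivity) (Real.rpow_nonneg h1 _))
    (Real.rpow_nonneg h2 _)

lemma kron_val {m n p q : ℕ} (hm : 0 < m) (hn : 0 < n) (hp : 0 < p) (hq : 0 < q)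
    (A : Matrix (Fin m) (Fin n) ℝ) (hA : ∀ i j, 0 ≤ A i j)
    (C : Matrix (Fin p) (Fin q) ℝ) (hC : ∀ k l, 0 ≤ C k l)
    (x : Fin n → ℝ) (hx : ∀ j, 0 < x j) (y : Fin q → ℝ) (hy : ∀ l, 0 < y l) :
    (Fintype.card (Fin m × Fin p) : ℝ) *
      (∏ ik, (A ⊗ₖ C).mulVec (fun jl : Fin n × Fin q => x jl.1 * y jl.2) ik) ^
        ((1:ℝ)/(Fintype.card (Fin m × Fin p) : ℝ)) /
      (∏ jl : Fin n × Fin q, x jl.1 * y jl.2) ^ ((1:ℝ)/(Fintype.card (Fin n × Fin q) : ℝ))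
    = ((m:ℝ) * (∏ i, A.mulVec x i) ^ ((1:ℝ)/(m:ℝ)) / (∏ j, x j) ^ ((1:ℝ)/(n:ℝ))) *
      ((p:ℝ) * (∏ k, C.mulVec y k) ^ ((1:ℝ)/(p:ℝ)) / (∏ l, y l) ^ ((1:ℝ)/(q:ℝ))) := by
  have hmv : ∀ ik : Fin m × Fin p,
      (A ⊗ₖ C).mulVec (fun jl : Fin n × Fin q => x jl.1 * y jl.2) ik
        = A.mulVec x ik.1 * C.mulVec y ik.2 := by
    intro ik
    simp only [Matrix.mulVec, dotProduct, Matrix.kroneckerMap_apply, Fintype.sum_prod_type]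
    rw [Finset.sum_mul_sum]
    exact Finset.sum_congr rfl fun j _ => Finset.sum_congr rfl fun l _ => by ring
  have hP : (0:ℝ) ≤ ∏ i, A.mulVec x i := by
    refine Finset.prod_nonneg fun i _ => ?_
    simp only [Matrix.mulVec, dotProduct]
    exact Finset.sum_nonneg fun j _ => mul_nonneg (hA i j) (hx j).le
  have hQ : (0:ℝ) ≤ ∏ k, C.mulVec y k := by
    refine Finset.prod_nonneg fun k _ => ?_
    simp only [Matrix.mulVec, dotProduct]
    exact Finset.sum_nonneg fun l _ => mul_nonneg (hC k l) (hy l).le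
  have hX : (0:ℝ) < ∏ j, x j := Finset.prod_pos fun j _ => hx j
  have hY : (0:ℝ) < ∏ l, y l := Finset.prod_pos fun l _ => hy l
  have hprod1 : (∏ ik : Fin m × Fin p,
      (A ⊗ₖ C).mulVec (fun jl : Fin n × Fin q => x jl.1 * y jl.2) ik)
      = (∏ i, A.mulVec x i) ^ p * (∏ k, C.mulVec y k) ^ m := by
    simp only [hmv]
    rw [Fintype.prod_prod_type]
    simp [Finset.prod_mul_distrib, Finset.prod_const, Finset.prod_pow, Finset.card_univ]
  have hprod2 : (∏ jl : Fin n × Fin q, x jl.1 * y jl.2)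
      = (∏ j, x j) ^ q * (∏ l, y l) ^ n := by
    rw [Fintype.prod_prod_type]
    simp [Finset.prod_mul_distrib, Finset.prod_const, Finset.prod_pow, Finset.card_univ]
  rw [hprod1, hprod2]
  have hcard1 : (Fintype.card (Fin m × Fin p) : ℝ) = (m:ℝ) * p := by
    simp [Fintype.card_prod]
  have hcard2 : (Fintype.card (Fin n × Fin q) : ℝ) = (n:ℝ) * q := by
    simp [Fintype.card_prod]
  rw [hcard1, hcard2]
  have hm' : (0:ℝ) < m := by exact_mod_cast hm
  have hn' : (0:ℝ) < n := by exact_mod_cast hn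
  have hp' : (0:ℝ) < p := by exact_mod_cast hp
  have hq' : (0:ℝ) < q := by exact_mod_cast hq
  have e1 : ((∏ i, A.mulVec x i) ^ p * (∏ k, C.mulVec y k) ^ m) ^ ((1:ℝ)/((m:ℝ)*p))
      = (∏ i, A.mulVec x i) ^ ((1:ℝ)/(m:ℝ)) * (∏ k, C.mulVec y k) ^ ((1:ℝ)/(p:ℝ)) := by
    rw [Real.mul_rpow (pow_nonneg hP p) (pow_nonneg hQ m),
      ← Real.rpow_natCast (∏ i, A.mulVec x i) p, ← Real.rpow_natCast (∏ k, C.mulVec y k) m,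
      ← Real.rpow_mul hP, ← Real.rpow_mul hQ]
    have c1 : (p:ℝ) * ((1:ℝ)/((m:ℝ)*p)) = (1:ℝ)/(m:ℝ) := by
      field_simp
    have c2 : (m:ℝ) * ((1:ℝ)/((m:ℝ)*p)) = (1:ℝ)/(p:ℝ) := by
      field_simp
    rw [c1, c2]
  have e2 : ((∏ j, x j) ^ q * (∏ l, y l) ^ n) ^ ((1:ℝ)/((n:ℝ)*q))
      = (∏ j, x j) ^ ((1:ℝ)/(n:ℝ)) * (∏ l, y l) ^ ((1:ℝ)/(q:ℝ)) := by
    rw [Real.mul_rpow (pow_nonneg hX.le q) (pow_nonneg hY.le n),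
      ← Real.rpow_natCast (∏ j, x j) q, ← Real.rpow_natCast (∏ l, y l) n,
      ← Real.rpow_mul hX.le, ← Real.rpow_mul hY.le]
    have c1 : (q:ℝ) * ((1:ℝ)/((n:ℝ)*q)) = (1:ℝ)/(n:ℝ) := by
      field_simp
    have c2 : (n:ℝ) * ((1:ℝ)/((n:ℝ)*q)) = (1:ℝ)/(q:ℝ) := by
      field_simp
    rw [c1, c2]
  rw [e1, e2]
  have hXr : (0:ℝ) < (∏ j, x j) ^ ((1:ℝ)/(n:ℝ)) := Real.rpow_pos_of_pos hX _
  have hYr : (0:ℝ) < (∏ l, y l) ^ ((1:ℝ)/(q:ℝ)) := Real.rpow_pos_of_pos hY _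
  field_simp

/-- The capacity of a Kronecker (tensor) product is at most the product of the capacities. -/
theorem matCap_kronecker_le {m n p q : ℕ} (hm : 0 < m) (hn : 0 < n) (hp : 0 < p) (hq : 0 < q)
    (A : Matrix (Fin m) (Fin n) ℝ) (hA : ∀ i j, 0 ≤ A i j)
    (C : Matrix (Fin p) (Fin q) ℝ) (hC : ∀ k l, 0 ≤ C k l) :
    matCap (A ⊗ₖ C) ≤ matCap A * matCap C := by
  have hAC : ∀ (ik : Fin m × Fin p) (jl : Fin n × Fin q), 0 ≤ (A ⊗ₖ C) ik jl := by
    intro ik jl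
    simpa [Matrix.kroneckerMap_apply] using mul_nonneg (hA ik.1 jl.1) (hC ik.2 jl.2)
  have hbdd : BddBelow (capSet (A ⊗ₖ C)) :=
    ⟨0, fun c hc => capSet_nonneg _ hAC c hc⟩
  rw [matCap_eq_sInf_capSet, matCap_eq_sInf_capSet, matCap_eq_sInf_capSet]
  set α := sInf (capSet A) with hαdef
  set γ := sInf (capSet C) with hγdef
  have hα0 : 0 ≤ α := Real.sInf_nonneg (capSet_nonneg A hA)
  have hγ0 : 0 ≤ γ := Real.sInf_nonneg (capSet_nonneg C hC)
  refine le_of_forall_pos_le_add fun δ hδ => ?_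
  set ε := min 1 (δ / (α + γ + 1)) with hεdef
  have hsum : (0:ℝ) < α + γ + 1 := by linarith
  have hε : 0 < ε := lt_min one_pos (div_pos hδ hsum)
  have hε1 : ε ≤ 1 := min_le_left _ _
  have hεδ : ε * (α + γ + 1) ≤ δ := by
    rw [← le_div_iff₀ hsum]
    exact min_le_right _ _
  obtain ⟨a, haS, halt⟩ := Real.lt_sInf_add_pos (capSet_nonempty A) hε
  obtain ⟨c, hcS, hclt⟩ := Real.lt_sInf_add_pos (capSet_nonempty C) hε
  have ha0 : 0 ≤ a := capSet_nonneg A hA a haS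
  have hc0 : 0 ≤ c := capSet_nonneg C hC c hcS
  obtain ⟨x, hx, haeq⟩ := haS
  obtain ⟨y, hy, hceq⟩ := hcS
  have hmem : a * c ∈ capSet (A ⊗ₖ C) := by
    refine ⟨fun jl : Fin n × Fin q => x jl.1 * y jl.2,
      fun jl => mul_pos (hx jl.1) (hy jl.2), ?_⟩
    rw [haeq, hceq]
    simp only [Fintype.card_fin]
    exact (kron_val hm hn hp hq A hA C hC x hx y hy).symm
  have h1 : sInf (capSet (A ⊗ₖ C)) ≤ a * c := csInf_le hbdd hmem
  have h2 : a * c ≤ (α + ε) * (γ + ε) :=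
    mul_le_mul halt.le hclt.le hc0 (by linarith)
  nlinarith [hε.le, hε1, hεδ, hα0, hγ0]
end

section
/- For any nonnegative matrix A ∈ ℝ^{m×n} and the all-ones matrix J_{p×q}, it holds that cap(A ⊗ (1/(pq))·J_{p×q}) = cap(A), Δ(A ⊗ (1/(pq))·J_{p×q}) = Δ(A), and s(A ⊗ (1/(pq))·J_{p×q}) = s(A). -/
open Matrix BigOperators

open scoped Kronecker

/-- Tensoring with the normalized all-ones matrix preserves capacity, Δ and size. -/
theorem matCap_matDelta_matSize_kronecker_ones {m n p q : ℕ}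
    (hm : 0 < m) (hn : 0 < n) (hp : 0 < p) (hq : 0 < q)
    (A : Matrix (Fin m) (Fin n) ℝ) (hA : ∀ i j, 0 ≤ A i j)
    (J : Matrix (Fin p) (Fin q) ℝ) (hJ : ∀ k l, J k l = 1) :
    matCap (A ⊗ₖ ((1 / ((p : ℝ) * (q : ℝ))) • J)) = matCap A ∧
    matDelta (A ⊗ₖ ((1 / ((p : ℝ) * (q : ℝ))) • J)) = matDelta A ∧
    matSize (A ⊗ₖ ((1 / ((p : ℝ) * (q : ℝ))) • J)) = matSize A := by
  have hsize : matSize (A ⊗ₖ ((1 / ((p : ℝ) * (q : ℝ))) • J)) = matSize A := by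
    have hB : ∀ (ik : Fin m × Fin p) (jl : Fin n × Fin q),
        (A ⊗ₖ ((1 / ((p : ℝ) * (q : ℝ))) • J)) ik jl = (1 / ((p:ℝ)*q)) * A ik.1 jl.1 := by
      rintro ⟨i,k⟩ ⟨j,l⟩
      simp [Matrix.kroneckerMap_apply, hJ, mul_comm]
    have hpq : ((p:ℝ) * q) ≠ 0 := by positivity
    simp only [matSize, Fintype.sum_prod_type, hB]
    simp only [Finset.sum_const, Finset.card_univ, Fintype.card_fin, nsmul_eq_mul, ← Finset.mul_sum]
    field_simp
  have hdelta : matDelta (A ⊗ₖ ((1 / ((p : ℝ) * (q : ℝ))) • J)) = matDelta A := by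
    have hB : ∀ (ik : Fin m × Fin p) (jl : Fin n × Fin q),
        (A ⊗ₖ ((1 / ((p : ℝ) * (q : ℝ))) • J)) ik jl = (1 / ((p:ℝ)*q)) * A ik.1 jl.1 := by
      rintro ⟨i,k⟩ ⟨j,l⟩
      simp [Matrix.kroneckerMap_apply, hJ, mul_comm]
    have hp' : ((p:ℝ)) ≠ 0 := by positivity
    have hq' : ((q:ℝ)) ≠ 0 := by positivity
    have hm' : ((m:ℝ)) ≠ 0 := by positivity
    have hn' : ((n:ℝ)) ≠ 0 := by positivity
    -- row sums
    have hrow : ∀ (ik : Fin m × Fin p),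
        ((Fintype.card (Fin m × Fin p) : ℝ)) * ∑ jl, (A ⊗ₖ ((1 / ((p : ℝ) * (q : ℝ))) • J)) ik jl
        = (m : ℝ) * ∑ j, A ik.1 j := by
      intro ik
      simp only [Fintype.sum_prod_type, hB, Finset.sum_const, Finset.card_univ, Fintype.card_fin,
        nsmul_eq_mul, ← Finset.mul_sum, Fintype.card_prod]
      push_cast
      field_simp
    have hcol : ∀ (jl : Fin n × Fin q),
        ((Fintype.card (Fin n × Fin q) : ℝ)) * ∑ ik, (A ⊗ₖ ((1 / ((p : ℝ) * (q : ℝ))) • J)) ik jl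
        = (n : ℝ) * ∑ i, A i jl.1 := by
      intro jl
      simp only [Fintype.sum_prod_type, hB, Finset.sum_const, Finset.card_univ, Fintype.card_fin,
        nsmul_eq_mul, ← Finset.mul_sum, Fintype.card_prod]
      push_cast
      field_simp
    unfold matDelta
    rw [hsize]
    have e1 : ∑ ik : Fin m × Fin p, (matSize A - (Fintype.card (Fin m × Fin p) : ℝ) *
        ∑ jl, (A ⊗ₖ ((1 / ((p : ℝ) * (q : ℝ))) • J)) ik jl) ^ 2
        = (p : ℝ) * ∑ i, (matSize A - (m : ℝ) * ∑ j, A i j) ^ 2 := by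
      rw [Finset.sum_congr rfl (fun ik _ => by rw [hrow ik])]
      rw [Fintype.sum_prod_type]
      simp only [Finset.sum_const, Finset.card_univ, Fintype.card_fin, nsmul_eq_mul,
        Finset.mul_sum]
    have e2 : ∑ jl : Fin n × Fin q, (matSize A - (Fintype.card (Fin n × Fin q) : ℝ) *
        ∑ ik, (A ⊗ₖ ((1 / ((p : ℝ) * (q : ℝ))) • J)) ik jl) ^ 2
        = (q : ℝ) * ∑ j, (matSize A - (n : ℝ) * ∑ i, A i j) ^ 2 := by
      rw [Finset.sum_congr rfl (fun jl _ => by rw [hcol jl])]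
      rw [Fintype.sum_prod_type]
      simp only [Finset.sum_const, Finset.card_univ, Fintype.card_fin, nsmul_eq_mul,
        Finset.mul_sum]
    rw [e1, e2]
    simp only [Fintype.card_prod, Fintype.card_fin]
    push_cast
    field_simp
  have hcap : matCap (A ⊗ₖ ((1 / ((p : ℝ) * (q : ℝ))) • J)) = matCap A := by
    classical
    set B := A ⊗ₖ ((1 / ((p : ℝ) * (q : ℝ))) • J) with hBdef
    have hB : ∀ (ik : Fin m × Fin p) (jl : Fin n × Fin q),
        B ik jl = (1 / ((p:ℝ)*q)) * A ik.1 jl.1 := by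
      rintro ⟨i,k⟩ ⟨j,l⟩
      simp [hBdef, Matrix.kroneckerMap_apply, hJ, mul_comm]
    have hp' : (0:ℝ) < p := by positivity
    have hq' : (0:ℝ) < q := by positivity
    have hm' : (0:ℝ) < m := by positivity
    have hn' : (0:ℝ) < n := by positivity
    -- the averaged vector
    set avg : ((Fin n × Fin q) → ℝ) → (Fin n → ℝ) :=
      fun x j => (1/(q:ℝ)) * ∑ l, x (j, l) with havg
    have havg_pos : ∀ x : (Fin n × Fin q) → ℝ, (∀ jl, 0 < x jl) → ∀ j, 0 < avg x j := by
      intro x hx j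
      have : 0 < ∑ l, x (j, l) := Finset.sum_pos (fun l _ => hx _) ⟨⟨0, hq⟩, Finset.mem_univ _⟩
      positivity
    -- mulVec of B
    have hmv : ∀ (x : (Fin n × Fin q) → ℝ) (i : Fin m) (k : Fin p),
        B.mulVec x (i, k) = (1/(p:ℝ)) * A.mulVec (avg x) i := by
      intro x i k
      simp only [Matrix.mulVec, dotProduct, Fintype.sum_prod_type, havg]
      rw [Finset.mul_sum]
      refine Finset.sum_congr rfl (fun j _ => ?_)
      simp only [hB]
      rw [← Finset.mul_sum]
      field_simp
    -- the numerator identity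
    have hnum : ∀ (x : (Fin n × Fin q) → ℝ), (∀ jl, 0 < x jl) →
        (Fintype.card (Fin m × Fin p) : ℝ) *
          (∏ ik, B.mulVec x ik) ^ ((1:ℝ)/(Fintype.card (Fin m × Fin p) : ℝ))
        = (m:ℝ) * (∏ i, A.mulVec (avg x) i) ^ ((1:ℝ)/(m:ℝ)) := by
      intro x hx
      have hP0 : (0:ℝ) ≤ ∏ i, A.mulVec (avg x) i := by
        apply Finset.prod_nonneg
        intro i _
        simp only [Matrix.mulVec, dotProduct]
        exact Finset.sum_nonneg (fun j _ => mul_nonneg (hA i j) (havg_pos x hx j).le)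
      set P := ∏ i, A.mulVec (avg x) i with hPdef
      have hQ : ∏ ik, B.mulVec x ik = ((1/(p:ℝ))^m * P) ^ p := by
        rw [Fintype.prod_prod_type]
        rw [Finset.prod_congr rfl (fun i _ => Finset.prod_congr rfl (fun k _ => hmv x i k))]
        simp only [Finset.prod_const, Finset.card_univ, Fintype.card_fin]
        rw [Finset.prod_pow, Finset.prod_mul_distrib, Finset.prod_const, Finset.card_univ,
          Fintype.card_fin, hPdef]
      have hR0 : (0:ℝ) ≤ (1/(p:ℝ))^m * P := by positivity
      rw [hQ, ← Real.rpow_natCast ((1/(p:ℝ))^m * P) p, ← Real.rpow_mul hR0]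
      have hcard : (Fintype.card (Fin m × Fin p) : ℝ) = (m:ℝ) * p := by
        simp [Fintype.card_prod]
      rw [hcard]
      have he : (p:ℝ) * ((1:ℝ)/((m:ℝ)*p)) = 1/(m:ℝ) := by field_simp
      rw [he, Real.mul_rpow (by positivity) hP0,
        ← Real.rpow_natCast (1/(p:ℝ)) m, ← Real.rpow_mul (by positivity)]
      have he2 : (m:ℝ) * ((1:ℝ)/(m:ℝ)) = 1 := by field_simp
      rw [he2, Real.rpow_one]
      have hc : (m:ℝ) * (p:ℝ) * (1/(p:ℝ)) = m := by field_simp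
      rw [show ((m:ℝ)*p) * ((1/(p:ℝ)) * P ^ ((1:ℝ)/(m:ℝ))) = ((m:ℝ)*(p:ℝ)*(1/(p:ℝ))) * P ^ ((1:ℝ)/(m:ℝ)) from by ring, hc]
    -- denominator inequality (AM-GM)
    have hden : ∀ (x : (Fin n × Fin q) → ℝ), (∀ jl, 0 < x jl) →
        (∏ jl, x jl) ^ ((1:ℝ)/(Fintype.card (Fin n × Fin q) : ℝ))
        ≤ (∏ j, avg x j) ^ ((1:ℝ)/(n:ℝ)) := by
      intro x hx
      have hcard : (Fintype.card (Fin n × Fin q) : ℝ) = (n:ℝ) * q := by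
        simp [Fintype.card_prod]
      rw [hcard]
      have hG : ∀ j, (0:ℝ) < ∏ l, x (j, l) := fun j => Finset.prod_pos (fun l _ => hx _)
      have h1 : ∏ jl : Fin n × Fin q, x jl = ∏ j, ∏ l, x (j, l) := Fintype.prod_prod_type _
      rw [h1]
      have h2 : (∏ j, ∏ l, x (j, l)) ^ ((1:ℝ)/((n:ℝ)*q))
          = ∏ j, (∏ l, x (j, l)) ^ ((1:ℝ)/((n:ℝ)*q)) := by
        rw [← Real.finset_prod_rpow _ _ (fun j _ => (hG j).le)]
      rw [h2]
      have h3 : (∏ j, avg x j) ^ ((1:ℝ)/(n:ℝ)) = ∏ j, (avg x j) ^ ((1:ℝ)/(n:ℝ)) := by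
        rw [← Real.finset_prod_rpow _ _ (fun j _ => (havg_pos x hx j).le)]
      rw [h3]
      apply Finset.prod_le_prod
      · intro j _; exact Real.rpow_nonneg (hG j).le _
      · intro j _
        have hgm : (∏ l, x (j, l)) ^ ((1:ℝ)/(q:ℝ)) ≤ avg x j := by
          have := Real.geom_mean_le_arith_mean_weighted Finset.univ (fun _ : Fin q => (1:ℝ)/q)
            (fun l => x (j, l)) (fun l _ => by positivity)
            (by rw [Finset.sum_const, Finset.card_univ, Fintype.card_fin, nsmul_eq_mul]; field_simp)
            (fun l _ => (hx _).le)
          calc (∏ l, x (j, l)) ^ ((1:ℝ)/(q:ℝ))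
              = ∏ l, (x (j, l)) ^ ((1:ℝ)/(q:ℝ)) := by
                rw [← Real.finset_prod_rpow _ _ (fun l _ => (hx _).le)]
            _ ≤ ∑ l, (1/(q:ℝ)) * x (j, l) := this
            _ = avg x j := by
                rw [show avg x j = (1/(q:ℝ)) * ∑ l, x (j, l) from rfl, Finset.mul_sum]
        have key : (∏ l, x (j, l)) ^ ((1:ℝ)/((n:ℝ)*q))
            = ((∏ l, x (j, l)) ^ ((1:ℝ)/(q:ℝ))) ^ ((1:ℝ)/(n:ℝ)) := by
          rw [← Real.rpow_mul (hG j).le]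
          congr 1
          field_simp
        rw [key]
        exact Real.rpow_le_rpow (Real.rpow_nonneg (hG j).le _) hgm (by positivity)
    -- the two sets
    rw [show matCap B = sInf {c : ℝ | ∃ x : (Fin n × Fin q) → ℝ, (∀ jl, 0 < x jl) ∧
        c = (Fintype.card (Fin m × Fin p) : ℝ) *
          (∏ ik, B.mulVec x ik) ^ ((1:ℝ)/(Fintype.card (Fin m × Fin p) : ℝ)) /
          (∏ jl, x jl) ^ ((1:ℝ)/(Fintype.card (Fin n × Fin q) : ℝ))} from rfl,
      show matCap A = sInf {c : ℝ | ∃ y : Fin n → ℝ, (∀ j, 0 < y j) ∧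
        c = (Fintype.card (Fin m) : ℝ) *
          (∏ i, A.mulVec y i) ^ ((1:ℝ)/(Fintype.card (Fin m) : ℝ)) /
          (∏ j, y j) ^ ((1:ℝ)/(Fintype.card (Fin n) : ℝ))} from rfl]
    set SB := {c : ℝ | ∃ x : (Fin n × Fin q) → ℝ, (∀ jl, 0 < x jl) ∧
        c = (Fintype.card (Fin m × Fin p) : ℝ) *
          (∏ ik, B.mulVec x ik) ^ ((1:ℝ)/(Fintype.card (Fin m × Fin p) : ℝ)) /
          (∏ jl, x jl) ^ ((1:ℝ)/(Fintype.card (Fin n × Fin q) : ℝ))} with hSBdef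
    set SA := {c : ℝ | ∃ y : Fin n → ℝ, (∀ j, 0 < y j) ∧
        c = (Fintype.card (Fin m) : ℝ) *
          (∏ i, A.mulVec y i) ^ ((1:ℝ)/(Fintype.card (Fin m) : ℝ)) /
          (∏ j, y j) ^ ((1:ℝ)/(Fintype.card (Fin n) : ℝ))} with hSAdef
    -- nonemptiness
    have hSA_ne : SA.Nonempty := ⟨_, fun _ => (1:ℝ), fun _ => one_pos, rfl⟩
    have hSB_ne : SB.Nonempty := ⟨_, fun _ => (1:ℝ), fun _ => one_pos, rfl⟩
    -- lower bounds
    have hSA_lb : ∀ b ∈ SA, (0:ℝ) ≤ b := by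
      rintro b ⟨y, hy, rfl⟩
      apply div_nonneg _ (Real.rpow_nonneg (Finset.prod_nonneg fun j _ => (hy j).le) _)
      apply mul_nonneg (Nat.cast_nonneg _)
      apply Real.rpow_nonneg
      apply Finset.prod_nonneg
      intro i _
      simp only [Matrix.mulVec, dotProduct]
      exact Finset.sum_nonneg fun j _ => mul_nonneg (hA i j) (hy j).le
    have hSB_lb : ∀ b ∈ SB, (0:ℝ) ≤ b := by
      rintro b ⟨x, hx, rfl⟩
      apply div_nonneg _ (Real.rpow_nonneg (Finset.prod_nonneg fun jl _ => (hx jl).le) _)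
      apply mul_nonneg (Nat.cast_nonneg _)
      apply Real.rpow_nonneg
      apply Finset.prod_nonneg
      intro ik _
      simp only [Matrix.mulVec, dotProduct]
      refine Finset.sum_nonneg fun jl _ => mul_nonneg ?_ (hx jl).le
      rw [hB]
      have := hA ik.1 jl.1
      positivity
    have hbddSA : BddBelow SA := ⟨0, hSA_lb⟩
    have hbddSB : BddBelow SB := ⟨0, hSB_lb⟩
    -- SA ⊆ SB
    have hsub : SA ⊆ SB := by
      rintro c ⟨y, hy, rfl⟩
      refine ⟨fun jl => y jl.1, fun jl => hy jl.1, ?_⟩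
      have hprody : (0:ℝ) < ∏ j, y j := Finset.prod_pos fun j _ => hy j
      have havgy : avg (fun jl => y jl.1) = y := by
        funext j
        rw [show avg (fun jl => y jl.1) j = (1/(q:ℝ)) * ∑ _l : Fin q, y j from rfl,
          Finset.sum_const, Finset.card_univ, Fintype.card_fin, nsmul_eq_mul]
        field_simp
      rw [show ((Fintype.card (Fin m × Fin p) : ℝ) *
          (∏ ik, B.mulVec (fun jl => y jl.1) ik) ^
            ((1:ℝ)/(Fintype.card (Fin m × Fin p) : ℝ)))
          = (m:ℝ) * (∏ i, A.mulVec (avg (fun jl => y jl.1)) i) ^ ((1:ℝ)/(m:ℝ)) from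
        hnum _ (fun jl => hy jl.1), havgy]
      have hdy : (∏ jl : Fin n × Fin q, y jl.1) ^ ((1:ℝ)/(Fintype.card (Fin n × Fin q) : ℝ))
          = (∏ j, y j) ^ ((1:ℝ)/(n:ℝ)) := by
        have h1 : ∏ jl : Fin n × Fin q, y jl.1 = (∏ j, y j) ^ q := by
          rw [Fintype.prod_prod_type]
          simp [Finset.prod_const, Finset.prod_pow]
        rw [h1, ← Real.rpow_natCast (∏ j, y j) q, ← Real.rpow_mul hprody.le]
        have : (Fintype.card (Fin n × Fin q) : ℝ) = (n:ℝ) * q := by simp [Fintype.card_prod]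
        rw [this]
        congr 1
        field_simp
      rw [hdy]
      simp [Fintype.card_fin]
    -- every element of SB dominates an element of SA
    have hdom : ∀ b ∈ SB, sInf SA ≤ b := by
      rintro b ⟨x, hx, rfl⟩
      have hy := havg_pos x hx
      have haSA : ((Fintype.card (Fin m) : ℝ) *
          (∏ i, A.mulVec (avg x) i) ^ ((1:ℝ)/(Fintype.card (Fin m) : ℝ)) /
          (∏ j, avg x j) ^ ((1:ℝ)/(Fintype.card (Fin n) : ℝ))) ∈ SA :=
        ⟨avg x, hy, rfl⟩
      refine le_trans (csInf_le hbddSA haSA) ?_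
      rw [hnum x hx]
      have hN : (0:ℝ) ≤ (m:ℝ) * (∏ i, A.mulVec (avg x) i) ^ ((1:ℝ)/(m:ℝ)) := by
        apply mul_nonneg (Nat.cast_nonneg _)
        apply Real.rpow_nonneg
        apply Finset.prod_nonneg
        intro i _
        simp only [Matrix.mulVec, dotProduct]
        exact Finset.sum_nonneg fun j _ => mul_nonneg (hA i j) (hy j).le
      have hd2 : (0:ℝ) < (∏ jl, x jl) ^ ((1:ℝ)/(Fintype.card (Fin n × Fin q) : ℝ)) :=
        Real.rpow_pos_of_pos (Finset.prod_pos fun jl _ => hx jl) _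
      simp only [Fintype.card_fin]
      exact div_le_div_of_nonneg_left hN hd2 (hden x hx)
    exact le_antisymm (csInf_le_csInf hbddSB hSA_ne hsub) (le_csInf hSB_ne hdom)
  exact ⟨hcap, hdelta, hsize⟩
end

section
/- In the operator dynamical system dU_i/dt = (s I_m − m∑_j U_j U_j^T) U_i + U_i (s I_n − n∑_j U_j^T U_j), the size s(t) = tr(∑_i U_i U_i^T) satisfies ds/dt = −2Δ, where Δ = (1/m)tr[(s I_m − m∑_i U_i U_i^T)²] + (1/n)tr[(s I_n − n∑_i U_i^T U_i)²]. In particular, the size is non-increasing over time. -/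
open Matrix BigOperators

/-!
Since `s = ∑ᵢ ‖Uᵢ‖²_F`, the flow gives `ds/dt = 2 ∑ᵢ tr(U̇ᵢ Uᵢᵀ) = 2 tr(Cₘ Bₘ) + 2 tr(Cₙ Bₙ)`.
As `tr Bₘ = tr Bₙ = s`, the matrix `Cₘ` is traceless and `Cₘ² = s Cₘ - m Cₘ Bₘ`, whence
`tr(Cₘ Bₘ) = -(1/m) tr(Cₘ²)`, and likewise for `n`; so `ds/dt = -2Δ`. Finally `Δ ≥ 0`, being
a combination of traces of squares of symmetric real matrices.
-/

namespace Matrix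

variable {ι m n : Type*} [Fintype ι] [DecidableEq ι] [Fintype m] [Fintype n]

theorem trace_mul_add_mul_mul_transpose {R : Type*} [CommRing R]
    (C : Matrix m m R) (U : Matrix m n R) (D : Matrix n n R) :
    ((C * U + U * D) * Uᵀ).trace = (C * (U * Uᵀ)).trace + (D * (Uᵀ * U)).trace := by
  rw [Matrix.add_mul, trace_add, Matrix.mul_assoc, Matrix.mul_assoc, trace_mul_comm U,
    Matrix.mul_assoc]

/-- `C` is `-card ι` times the traceless part of `B`. -/
theorem trace_mul_eq_neg_inv_card_mul_trace_sq {K : Type*} [Field K]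
    {B C : Matrix ι ι K} (hι : (Fintype.card ι : K) ≠ 0)
    (hC : C = B.trace • 1 - (Fintype.card ι : K) • B) :
    (C * B).trace = -(Fintype.card ι : K)⁻¹ * (C ^ 2).trace := by
  have htrace : C.trace = 0 := by
    rw [hC, trace_sub, trace_smul, trace_smul, trace_one, smul_eq_mul, smul_eq_mul, mul_comm,
      sub_self]
  have hsq : C ^ 2 = B.trace • C - (Fintype.card ι : K) • (C * B) := by
    conv_lhs => rw [sq]; enter [2]; rw [hC]
    rw [Matrix.mul_sub, Matrix.mul_smul, Matrix.mul_one, Matrix.mul_smul]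
  rw [hsq, trace_sub, trace_smul, trace_smul, htrace, smul_eq_mul, smul_eq_mul]
  field_simp
  ring

theorem trace_sq_nonneg_of_isSymm {C : Matrix ι ι ℝ} (hC : C.IsSymm) : 0 ≤ (C ^ 2).trace := by
  have hCH : Cᴴ * C = C ^ 2 := by rw [conjTranspose_eq_transpose_of_trivial, hC.eq, sq]
  exact hCH ▸ (posSemidef_conjTranspose_mul_self C).trace_nonneg

theorem hasDerivAt_trace_mul_transpose {U : ℝ → Matrix m n ℝ} {U' : Matrix m n ℝ} {t : ℝ}
    (hU : ∀ a b, HasDerivAt (fun τ => U τ a b) (U' a b) t) :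
    HasDerivAt (fun τ => (U τ * (U τ)ᵀ).trace) (2 * (U' * (U t)ᵀ).trace) t := by
  simp only [trace, diag_apply, mul_apply, transpose_apply, Finset.mul_sum]
  refine HasDerivAt.fun_sum fun a _ => HasDerivAt.fun_sum fun b _ => ?_
  exact ((hU a b).fun_mul (hU a b)).congr_deriv (by ring)

end Matrix

/-- In the operator dynamical system `dUᵢ/dt = Cₘ Uᵢ + Uᵢ Cₙ`, the size satisfies
`ds/dt = -2Δ`; in particular the size is non-increasing over time. -/
theorem opSize_deriv {k m n : ℕ} (hm : 0 < m) (hn : 0 < n)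
    (U : ℝ → Fin k → Matrix (Fin m) (Fin n) ℝ)
    (s Δ : ℝ → ℝ)
    (Cm : ℝ → Matrix (Fin m) (Fin m) ℝ) (Cn : ℝ → Matrix (Fin n) (Fin n) ℝ)
    (hs : ∀ t, s t = (∑ i, U t i * (U t i)ᵀ).trace)
    (hCm : ∀ t, Cm t = s t • (1 : Matrix (Fin m) (Fin m) ℝ) - (m : ℝ) • ∑ i, U t i * (U t i)ᵀ)
    (hCn : ∀ t, Cn t = s t • (1 : Matrix (Fin n) (Fin n) ℝ) - (n : ℝ) • ∑ i, (U t i)ᵀ * U t i)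
    (hΔ : ∀ t, Δ t = (1 / (m : ℝ)) * ((Cm t ^ 2).trace) + (1 / (n : ℝ)) * ((Cn t ^ 2).trace))
    (hode : ∀ t i a b,
      HasDerivAt (fun τ => U τ i a b) ((Cm t * U t i + U t i * Cn t) a b) t) :
    (∀ t, HasDerivAt s (-2 * Δ t) t) ∧ Antitone s := by
  have hsn : ∀ t, s t = (∑ i, (U t i)ᵀ * U t i).trace := fun t => by
    simp only [hs t, trace_sum, trace_mul_comm (U t _)]
  have hCmB : ∀ t, (Cm t * ∑ i, U t i * (U t i)ᵀ).trace = -(m : ℝ)⁻¹ * (Cm t ^ 2).trace := by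
    intro t
    simpa using trace_mul_eq_neg_inv_card_mul_trace_sq (ι := Fin m) (K := ℝ)
      (by simp [hm.ne']) (by rw [Fintype.card_fin, ← hs t]; exact hCm t)
  have hCnB : ∀ t, (Cn t * ∑ i, (U t i)ᵀ * U t i).trace = -(n : ℝ)⁻¹ * (Cn t ^ 2).trace := by
    intro t
    simpa using trace_mul_eq_neg_inv_card_mul_trace_sq (ι := Fin n) (K := ℝ)
      (by simp [hn.ne']) (by rw [Fintype.card_fin, ← hsn t]; exact hCn t)
  have hderiv : ∀ t, HasDerivAt s (-2 * Δ t) t := by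
    intro t
    have hs' : s = fun τ => ∑ i, (U τ i * (U τ i)ᵀ).trace := funext fun τ => by
      rw [hs τ, trace_sum]
    rw [hs']
    refine (HasDerivAt.fun_sum fun i _ => hasDerivAt_trace_mul_transpose (hode t i)).congr_deriv ?_
    simp only [trace_mul_add_mul_mul_transpose, ← Finset.mul_sum, Finset.sum_add_distrib,
      ← trace_sum, hCmB, hCnB, hΔ]
    ring
  have hsymm : ∀ t, (Cm t).IsSymm ∧ (Cn t).IsSymm := fun t => by
    simp [IsSymm, hCm t, hCn t, transpose_sum, transpose_mul]
  refine ⟨hderiv, antitone_of_hasDerivAt_nonpos hderiv fun t => ?_⟩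
  have hΔ_nonneg : 0 ≤ Δ t := by
    rw [hΔ t]
    have := trace_sq_nonneg_of_isSymm (hsymm t).1
    have := trace_sq_nonneg_of_isSymm (hsymm t).2
    positivity
  simpa using hΔ_nonneg
end

section
/- In the operator dynamical system dU_i/dt = C_m U_i + U_i C_n (where C_m = s I_m − m∑_j U_j U_j^T and C_n = s I_n − n∑_j U_j^T U_j), the quantity Δ = (1/m)tr(C_m²) + (1/n)tr(C_n²) satisfies dΔ/dt = −4 ∑_{i=1}^k ‖dU_i/dt‖_F². In particular, Δ is non-increasing over time. -/
/-!
Writing `Vᵢ = C_m Uᵢ + Uᵢ C_n`, the derivative of `Δ` along any direction `W` is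
`-4 ∑ᵢ tr (Vᵢ Wᵢᵀ)`, i.e. the flow is gradient descent for `Δ / 4` in the Frobenius pairing.
Only two facts about `C_m`, `C_n` enter: they are traceless, which kills the `s`-term in their
derivatives, and symmetric, which turns `tr (C (W Uᵀ + U Wᵀ))` into `2 tr (C U Wᵀ)`.
Taking `W = dU/dt` gives `dΔ/dt = -4 ∑ᵢ ‖Vᵢ‖_F² ≤ 0`.
-/

open Matrix

section Calculus

variable {𝕜 : Type*} [NontriviallyNormedField 𝕜] {l m n : Type*} {t : 𝕜}

theorem hasDerivAt_matrix_iff [Fintype n] {f : 𝕜 → Matrix m n 𝕜} {f' : Matrix m n 𝕜} :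
    HasDerivAt f f' t ↔ ∀ i j, HasDerivAt (fun τ => f τ i j) (f' i j) t := by
  change HasDerivAt (fun τ i j => f τ i j) (fun i j => f' i j) t ↔ _
  simp only [hasDerivAt_pi]

theorem HasDerivAt.matrix_mul [Fintype m] [Fintype n] {f : 𝕜 → Matrix l m 𝕜}
    {g : 𝕜 → Matrix m n 𝕜} {f' : Matrix l m 𝕜} {g' : Matrix m n 𝕜}
    (hf : HasDerivAt f f' t) (hg : HasDerivAt g g' t) :
    HasDerivAt (fun τ => f τ * g τ) (f' * g t + f t * g') t := by
  rw [hasDerivAt_matrix_iff] at *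
  intro i j
  simp only [mul_apply, Matrix.add_apply, ← Finset.sum_add_distrib]
  exact HasDerivAt.fun_sum fun c _ => (hf i c).mul (hg c j)

theorem HasDerivAt.matrix_transpose [Fintype m] [Fintype n] {f : 𝕜 → Matrix m n 𝕜}
    {f' : Matrix m n 𝕜} (hf : HasDerivAt f f' t) : HasDerivAt (fun τ => (f τ)ᵀ) f'ᵀ t :=
  hasDerivAt_matrix_iff.2 fun i j => hasDerivAt_matrix_iff.1 hf j i

theorem HasDerivAt.matrix_trace [Fintype m] {f : 𝕜 → Matrix m m 𝕜} {f' : Matrix m m 𝕜}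
    (hf : HasDerivAt f f' t) : HasDerivAt (fun τ => (f τ).trace) f'.trace t :=
  HasDerivAt.fun_sum fun i _ => hasDerivAt_matrix_iff.1 hf i i

theorem HasDerivAt.matrix_trace_sq [Fintype m] [DecidableEq m] {f : 𝕜 → Matrix m m 𝕜}
    {f' : Matrix m m 𝕜} (hf : HasDerivAt f f' t) :
    HasDerivAt (fun τ => (f τ ^ 2).trace) (2 * (f t * f').trace) t := by
  simpa only [sq, trace_add, trace_mul_comm f', two_mul] using (hf.matrix_mul hf).matrix_trace

end Calculus

section Algebra

variable {ι m n R : Type*} [Fintype ι]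

/-- With `B = B_m` (resp. `B_n`) this is `C_m` (resp. `C_n`), as `s = tr B_m = tr B_n`. -/
def imbalance [Fintype m] [DecidableEq m] [CommRing R] (B : Matrix m m R) : Matrix m m R :=
  B.trace • 1 - (Fintype.card m : R) • B

def gramRow [Fintype n] [CommRing R] (U : ι → Matrix m n R) : Matrix m m R :=
  ∑ i, U i * (U i)ᵀ

def gramCol [Fintype m] [CommRing R] (U : ι → Matrix m n R) : Matrix n n R :=
  ∑ i, (U i)ᵀ * U i

def imbalanceFlow [Fintype m] [Fintype n] [DecidableEq m] [DecidableEq n] [CommRing R]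
    (U : ι → Matrix m n R) (i : ι) : Matrix m n R :=
  imbalance (gramRow U) * U i + U i * imbalance (gramCol U)

def imbalanceEnergy [Fintype m] [Fintype n] [DecidableEq m] [DecidableEq n] [Field R]
    (U : ι → Matrix m n R) : R :=
  (Fintype.card m : R)⁻¹ * (imbalance (gramRow U) ^ 2).trace
    + (Fintype.card n : R)⁻¹ * (imbalance (gramCol U) ^ 2).trace

section CommRing

variable [CommRing R]

theorem trace_gramCol [Fintype m] [Fintype n] (U : ι → Matrix m n R) :
    (gramCol U).trace = (gramRow U).trace := by
  simp only [gramCol, gramRow, trace_sum, trace_mul_comm (U _)ᵀ]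

theorem isSymm_gramRow [Fintype n] (U : ι → Matrix m n R) : (gramRow U).IsSymm := by
  simp only [IsSymm, gramRow, transpose_sum, transpose_mul, transpose_transpose]

theorem isSymm_gramCol [Fintype m] (U : ι → Matrix m n R) : (gramCol U).IsSymm := by
  simp only [IsSymm, gramCol, transpose_sum, transpose_mul, transpose_transpose]

theorem Matrix.IsSymm.imbalance [Fintype m] [DecidableEq m] {B : Matrix m m R} (hB : B.IsSymm) :
    (imbalance B).IsSymm :=
  (isSymm_one.smul _).sub (hB.smul _)

theorem trace_imbalance [Fintype m] [DecidableEq m] (B : Matrix m m R) :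
    (imbalance B).trace = 0 := by
  simp only [imbalance, trace_sub, trace_smul, trace_one, smul_eq_mul, mul_comm, sub_self]

theorem trace_mul_imbalance [Fintype m] [DecidableEq m] {C : Matrix m m R} (hC : C.trace = 0)
    (B : Matrix m m R) : (C * imbalance B).trace = -(Fintype.card m : R) * (C * B).trace := by
  simp only [imbalance, Matrix.mul_sub, Matrix.mul_smul, Matrix.mul_one, trace_sub, trace_smul,
    hC, smul_eq_mul]
  ring

theorem Matrix.IsSymm.trace_mul_transpose_add [Fintype m] {C : Matrix m m R} (hC : C.IsSymm)
    (A : Matrix m m R) : (C * (Aᵀ + A)).trace = 2 * (C * A).trace := by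
  rw [Matrix.mul_add, trace_add, ← trace_transpose (C * Aᵀ), transpose_mul, transpose_transpose,
    hC.eq, trace_mul_comm A, two_mul]

theorem Matrix.IsSymm.trace_mul_sum_mul_transpose_add [Fintype m] [Fintype n] {C : Matrix m m R}
    (hC : C.IsSymm) (U W : ι → Matrix m n R) :
    (C * ∑ i, (W i * (U i)ᵀ + U i * (W i)ᵀ)).trace = 2 * ∑ i, (C * U i * (W i)ᵀ).trace := by
  simp only [trace_sum, Finset.mul_sum, Matrix.mul_assoc]
  refine Finset.sum_congr rfl fun i _ => ?_
  simpa only [transpose_mul, transpose_transpose] using hC.trace_mul_transpose_add (U i * (W i)ᵀ)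

theorem Matrix.IsSymm.trace_mul_sum_transpose_mul_add [Fintype m] [Fintype n] {D : Matrix n n R}
    (hD : D.IsSymm) (U W : ι → Matrix m n R) :
    (D * ∑ i, ((W i)ᵀ * U i + (U i)ᵀ * W i)).trace = 2 * ∑ i, (U i * D * (W i)ᵀ).trace := by
  simp only [trace_sum, Finset.mul_sum]
  refine Finset.sum_congr rfl fun i _ => ?_
  have h := hD.trace_mul_transpose_add ((U i)ᵀ * W i)
  rw [transpose_mul, transpose_transpose] at h
  rw [h, ← Matrix.mul_assoc, trace_mul_cycle, ← trace_transpose]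
  simp only [transpose_mul, transpose_transpose, hD.eq, Matrix.mul_assoc]

theorem trace_mul_transpose_self [Fintype m] [Fintype n] (A : Matrix m n R) :
    (A * Aᵀ).trace = ∑ i, ∑ j, A i j ^ 2 := by
  simp only [trace, diag, mul_apply, transpose_apply, sq]

end CommRing

theorem inv_card_mul_trace_mul_imbalance [Fintype m] [DecidableEq m] [Field R] [CharZero R]
    {C : Matrix m m R} (hC : C.trace = 0) (B : Matrix m m R) :
    (Fintype.card m : R)⁻¹ * (C * imbalance B).trace = -(C * B).trace := by
  rw [trace_mul_imbalance hC]
  cases isEmpty_or_nonempty m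
  · simp [trace_eq_zero_of_isEmpty]
  · field_simp

end Algebra

section Dynamics

open scoped Matrix.Norms.Elementwise

variable {𝕜 ι m n : Type*} [NontriviallyNormedField 𝕜] [Fintype ι] [Fintype m] [Fintype n]
  {t : 𝕜}

theorem HasDerivAt.gramRow {U : 𝕜 → ι → Matrix m n 𝕜} {W : ι → Matrix m n 𝕜}
    (hU : ∀ i, HasDerivAt (fun τ => U τ i) (W i) t) :
    HasDerivAt (fun τ => gramRow (U τ)) (∑ i, (W i * (U t i)ᵀ + U t i * (W i)ᵀ)) t :=
  HasDerivAt.fun_sum fun i _ => (hU i).matrix_mul (hU i).matrix_transpose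

theorem HasDerivAt.gramCol {U : 𝕜 → ι → Matrix m n 𝕜} {W : ι → Matrix m n 𝕜}
    (hU : ∀ i, HasDerivAt (fun τ => U τ i) (W i) t) :
    HasDerivAt (fun τ => gramCol (U τ)) (∑ i, ((W i)ᵀ * U t i + (U t i)ᵀ * W i)) t :=
  HasDerivAt.fun_sum fun i _ => (hU i).matrix_transpose.matrix_mul (hU i)

theorem HasDerivAt.imbalance [DecidableEq m] {B : 𝕜 → Matrix m m 𝕜} {B' : Matrix m m 𝕜}
    (hB : HasDerivAt B B' t) : HasDerivAt (fun τ => imbalance (B τ)) (imbalance B') t :=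
  (hB.matrix_trace.smul_const 1).sub (hB.fun_const_smul _)

theorem HasDerivAt.imbalanceEnergy [DecidableEq m] [DecidableEq n] [CharZero 𝕜]
    {U : 𝕜 → ι → Matrix m n 𝕜} {W : ι → Matrix m n 𝕜}
    (hU : ∀ i, HasDerivAt (fun τ => U τ i) (W i) t) :
    HasDerivAt (fun τ => imbalanceEnergy (U τ))
      (-4 * ∑ i, (imbalanceFlow (U t) i * (W i)ᵀ).trace) t := by
  have hm := (HasDerivAt.gramRow hU).imbalance.matrix_trace_sq.const_mul (Fintype.card m : 𝕜)⁻¹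
  have hn := (HasDerivAt.gramCol hU).imbalance.matrix_trace_sq.const_mul (Fintype.card n : 𝕜)⁻¹
  refine (hm.add hn).congr_deriv ?_
  rw [mul_left_comm _ 2, inv_card_mul_trace_mul_imbalance (trace_imbalance _),
    mul_left_comm _ 2, inv_card_mul_trace_mul_imbalance (trace_imbalance _),
    (isSymm_gramRow _).imbalance.trace_mul_sum_mul_transpose_add,
    (isSymm_gramCol _).imbalance.trace_mul_sum_transpose_mul_add]
  simp only [imbalanceFlow, Matrix.add_mul, trace_add, Finset.sum_add_distrib]
  ring

end Dynamics

theorem opDelta_deriv_general {k m n : ℕ}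
    (U : ℝ → Fin k → Matrix (Fin m) (Fin n) ℝ)
    (s Δ : ℝ → ℝ)
    (Cm : ℝ → Matrix (Fin m) (Fin m) ℝ) (Cn : ℝ → Matrix (Fin n) (Fin n) ℝ)
    (hs : ∀ t, s t = (∑ i, U t i * (U t i)ᵀ).trace)
    (hCm : ∀ t, Cm t = s t • (1 : Matrix (Fin m) (Fin m) ℝ) - (m : ℝ) • ∑ i, U t i * (U t i)ᵀ)
    (hCn : ∀ t, Cn t = s t • (1 : Matrix (Fin n) (Fin n) ℝ) - (n : ℝ) • ∑ i, (U t i)ᵀ * U t i)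
    (hΔ : ∀ t, Δ t = (1 / (m : ℝ)) * ((Cm t ^ 2).trace) + (1 / (n : ℝ)) * ((Cn t ^ 2).trace))
    (hode : ∀ t i a b,
      HasDerivAt (fun τ => U τ i a b) ((Cm t * U t i + U t i * Cn t) a b) t) :
    (∀ t, HasDerivAt Δ
      (-4 * ∑ i, ∑ a, ∑ b, ((Cm t * U t i + U t i * Cn t) a b) ^ 2) t) ∧ Antitone Δ := by
  have hCm_eq (t : ℝ) : Cm t = imbalance (gramRow (U t)) := by
    rw [hCm, hs, imbalance, Fintype.card_fin]; rfl
  have hCn_eq (t : ℝ) : Cn t = imbalance (gramCol (U t)) := by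
    rw [hCn, (hs t).trans (trace_gramCol (U t)).symm, imbalance, Fintype.card_fin]; rfl
  have hflow (t : ℝ) (i : Fin k) : Cm t * U t i + U t i * Cn t = imbalanceFlow (U t) i := by
    rw [hCm_eq, hCn_eq]; rfl
  have hΔ_eq : Δ = fun t => imbalanceEnergy (U t) := funext fun t => by
    rw [hΔ, hCm_eq, hCn_eq, imbalanceEnergy, Fintype.card_fin, Fintype.card_fin, one_div, one_div]
  have hderiv (t : ℝ) :
      HasDerivAt Δ (-4 * ∑ i, ∑ a, ∑ b, ((Cm t * U t i + U t i * Cn t) a b) ^ 2) t := by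
    simp only [hflow, ← trace_mul_transpose_self, hΔ_eq]
    exact HasDerivAt.imbalanceEnergy fun i =>
      hasDerivAt_matrix_iff.2 fun a b => hflow t i ▸ hode t i a b
  exact ⟨hderiv, antitone_of_hasDerivAt_nonpos hderiv fun t =>
    mul_nonpos_of_nonpos_of_nonneg (by norm_num) (by positivity)⟩

/-- In the operator dynamical system `dUᵢ/dt = Cₘ Uᵢ + Uᵢ Cₙ`, the quantity
`Δ = (1/m) tr(Cₘ²) + (1/n) tr(Cₙ²)` satisfies `dΔ/dt = -4 ∑ᵢ ‖dUᵢ/dt‖_F²`;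
in particular Δ is non-increasing over time. -/
theorem opDelta_deriv {k m n : ℕ} (hm : 0 < m) (hn : 0 < n)
    (U : ℝ → Fin k → Matrix (Fin m) (Fin n) ℝ)
    (s Δ : ℝ → ℝ)
    (Cm : ℝ → Matrix (Fin m) (Fin m) ℝ) (Cn : ℝ → Matrix (Fin n) (Fin n) ℝ)
    (hs : ∀ t, s t = (∑ i, U t i * (U t i)ᵀ).trace)
    (hCm : ∀ t, Cm t = s t • (1 : Matrix (Fin m) (Fin m) ℝ) - (m : ℝ) • ∑ i, U t i * (U t i)ᵀ)
    (hCn : ∀ t, Cn t = s t • (1 : Matrix (Fin n) (Fin n) ℝ) - (n : ℝ) • ∑ i, (U t i)ᵀ * U t i)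
    (hΔ : ∀ t, Δ t = (1 / (m : ℝ)) * ((Cm t ^ 2).trace) + (1 / (n : ℝ)) * ((Cn t ^ 2).trace))
    (hode : ∀ t i a b,
      HasDerivAt (fun τ => U τ i a b) ((Cm t * U t i + U t i * Cn t) a b) t) :
    (∀ t, HasDerivAt Δ
      (-4 * ∑ i, ∑ a, ∑ b, ((Cm t * U t i + U t i * Cn t) a b) ^ 2) t) ∧ Antitone Δ :=
  opDelta_deriv_general U s Δ Cm Cn hs hCm hCn hΔ hode
end

section
/- If U = {U_1,…,U_k} and V = {V_1,…,V_k} with V_i = X U_i Y for all i, where X ∈ ℝ^{m×m} and Y ∈ ℝ^{n×n}, then cap(V) = det(X)^{2/m} · det(Y)^{2/n} · cap(U). -/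
/-
Left multiplication `Uᵢ ↦ X Uᵢ` turns `∑ Uᵢ Z Uᵢᵀ` into its congruence by `X`, so every value of
the objective is multiplied by `det(X)^{2/m}`. Right multiplication `Uᵢ ↦ Uᵢ Y` amounts to
evaluating the objective of `U` at `Y Z Yᵀ` instead of `Z`, up to the factor `det(Y)^{2/n}` coming
from `det Z`; for invertible `Y`, `Z ↦ Y Z Yᵀ` permutes the positive definite matrices, so the
infimum is unchanged. Finally, scaling a set of reals by `c ≥ 0` scales its infimum by `c`.
-/

open Matrix BigOperators

/-- Capacity of an operator given by matrices U_1, ..., U_k. -/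
noncomputable def opCap {k m n : ℕ} (U : Fin k → Matrix (Fin m) (Fin n) ℝ) : ℝ :=
  sInf {c : ℝ | ∃ X : Matrix (Fin n) (Fin n) ℝ, X.PosDef ∧
    c = (m : ℝ) * (∑ i, U i * X * (U i)ᵀ).det ^ ((1 : ℝ) / (m : ℝ)) /
        X.det ^ ((1 : ℝ) / (n : ℝ))}

/-- Size of an operator. -/
noncomputable def opSize {k m n : ℕ} (U : Fin k → Matrix (Fin m) (Fin n) ℝ) : ℝ :=
  (∑ i, U i * (U i)ᵀ).trace

/-- The measure Δ of distance to doubly balanced for an operator. -/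
noncomputable def opDelta {k m n : ℕ} (U : Fin k → Matrix (Fin m) (Fin n) ℝ) : ℝ :=
  (1 / (m : ℝ)) *
    ((opSize U • (1 : Matrix (Fin m) (Fin m) ℝ) - (m : ℝ) • ∑ i, U i * (U i)ᵀ) ^ 2).trace +
  (1 / (n : ℝ)) *
    ((opSize U • (1 : Matrix (Fin n) (Fin n) ℝ) - (n : ℝ) • ∑ i, (U i)ᵀ * U i) ^ 2).trace

open scoped Pointwise

namespace Matrix

variable {ι : Type*} [Fintype ι]

lemma posSemidef_sum_mul_mul_transpose {α κ : Type*} [Fintype κ] (s : Finset α)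
    (U : α → Matrix κ ι ℝ) {Z : Matrix ι ι ℝ} (hZ : Z.PosSemidef) :
    (∑ i ∈ s, U i * Z * (U i)ᵀ).PosSemidef :=
  posSemidef_sum s fun i _ ↦ by
    simpa [conjTranspose_eq_transpose_of_trivial] using hZ.mul_mul_conjTranspose_same (U i)

variable [DecidableEq ι]

lemma image_mul_mul_transpose_posDef {Y : Matrix ι ι ℝ} (hY : IsUnit Y) :
    (fun Z ↦ Y * Z * Yᵀ) '' {Z | Z.PosDef} = {Z | Z.PosDef} := by
  have hconj (W : Matrix ι ι ℝ) : (Y * W * Yᵀ).PosDef ↔ W.PosDef := by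
    simpa [star_eq_conjTranspose, conjTranspose_eq_transpose_of_trivial] using
      hY.posDef_star_right_conjugate_iff
  have hcancel (Z : Matrix ι ι ℝ) : Y * (Y⁻¹ * Z * Y⁻¹ᵀ) * Yᵀ = Z := by
    have hYdet := (isUnit_iff_isUnit_det Y).1 hY
    rw [transpose_nonsing_inv, ← Matrix.mul_assoc, ← Matrix.mul_assoc, mul_nonsing_inv _ hYdet,
      Matrix.one_mul, Matrix.mul_assoc, nonsing_inv_mul _ (by rwa [det_transpose]),
      Matrix.mul_one]
  ext Z
  refine ⟨fun ⟨W, hW, hWZ⟩ ↦ hWZ ▸ (hconj W).2 hW, fun hZ ↦ ⟨Y⁻¹ * Z * Y⁻¹ᵀ, ?_, hcancel Z⟩⟩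
  exact (hconj _).1 ((hcancel Z).symm ▸ hZ)

lemma det_mul_mul_transpose {R : Type*} [CommRing R] (X A : Matrix ι ι R) : (X * A * Xᵀ).det = X.det ^ 2 * A.det := by
  rw [det_mul, det_mul, det_transpose]; ring

end Matrix

section

variable {k m n : ℕ}

noncomputable def opCapObjective (U : Fin k → Matrix (Fin m) (Fin n) ℝ)
    (Z : Matrix (Fin n) (Fin n) ℝ) : ℝ :=
  (m : ℝ) * (∑ i, U i * Z * (U i)ᵀ).det ^ ((1 : ℝ) / (m : ℝ)) / Z.det ^ ((1 : ℝ) / (n : ℝ))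

lemma opCap_eq_sInf_image (U : Fin k → Matrix (Fin m) (Fin n) ℝ) :
    opCap U = sInf (opCapObjective U '' {Z | Z.PosDef}) := by
  simp only [opCap, opCapObjective, Set.image, Set.mem_ofPred_eq, eq_comm]

lemma opCapObjective_mul_left (X : Matrix (Fin m) (Fin m) ℝ) (U : Fin k → Matrix (Fin m) (Fin n) ℝ)
    {Z : Matrix (Fin n) (Fin n) ℝ} (hZ : Z.PosSemidef) :
    opCapObjective (fun i ↦ X * U i) Z = (X.det ^ 2) ^ ((1 : ℝ) / m) * opCapObjective U Z := by
  have hsum : ∑ i, X * U i * Z * (X * U i)ᵀ = X * (∑ i, U i * Z * (U i)ᵀ) * Xᵀ := by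
    simp only [transpose_mul, Finset.mul_sum, Finset.sum_mul, Matrix.mul_assoc]
  rw [opCapObjective, opCapObjective, hsum, det_mul_mul_transpose,
    Real.mul_rpow (sq_nonneg _) (posSemidef_sum_mul_mul_transpose _ U hZ).det_nonneg]
  ring

lemma opCapObjective_mul_right (U : Fin k → Matrix (Fin m) (Fin n) ℝ)
    {Y : Matrix (Fin n) (Fin n) ℝ} (hY : Y.det ≠ 0) {Z : Matrix (Fin n) (Fin n) ℝ}
    (hZ : Z.PosSemidef) :
    opCapObjective (fun i ↦ U i * Y) Z =
      (Y.det ^ 2) ^ ((1 : ℝ) / n) * opCapObjective U (Y * Z * Yᵀ) := by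
  have hsum : ∑ i, U i * Y * Z * (U i * Y)ᵀ = ∑ i, U i * (Y * Z * Yᵀ) * (U i)ᵀ := by
    simp only [transpose_mul, Matrix.mul_assoc]
  have hYpos : 0 < (Y.det ^ 2) ^ ((1 : ℝ) / n) := by positivity
  rw [opCapObjective, opCapObjective, hsum, det_mul_mul_transpose,
    Real.mul_rpow (sq_nonneg _) hZ.det_nonneg]
  field_simp

lemma opCap_mul_left (X : Matrix (Fin m) (Fin m) ℝ) (U : Fin k → Matrix (Fin m) (Fin n) ℝ) :
    opCap (fun i ↦ X * U i) = (X.det ^ 2) ^ ((1 : ℝ) / m) * opCap U := by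
  rw [opCap_eq_sInf_image, opCap_eq_sInf_image, ← smul_eq_mul,
    ← Real.sInf_smul_of_nonneg (by positivity), ← Set.image_smul, Set.image_image]
  exact congrArg sInf (Set.image_congr fun Z hZ ↦ opCapObjective_mul_left X U hZ.posSemidef)

lemma opCap_mul_right (U : Fin k → Matrix (Fin m) (Fin n) ℝ) {Y : Matrix (Fin n) (Fin n) ℝ}
    (hY : IsUnit Y.det) :
    opCap (fun i ↦ U i * Y) = (Y.det ^ 2) ^ ((1 : ℝ) / n) * opCap U := by
  conv_rhs => rw [opCap_eq_sInf_image,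
    ← image_mul_mul_transpose_posDef ((isUnit_iff_isUnit_det Y).2 hY), Set.image_image]
  rw [opCap_eq_sInf_image, ← smul_eq_mul, ← Real.sInf_smul_of_nonneg (by positivity),
    ← Set.image_smul, Set.image_image]
  exact congrArg sInf (Set.image_congr fun Z hZ ↦
    opCapObjective_mul_right U hY.ne_zero (PosDef.posSemidef hZ))

end

theorem opCap_scaling_general {k m n : ℕ}
    (U V : Fin k → Matrix (Fin m) (Fin n) ℝ)
    (X : Matrix (Fin m) (Fin m) ℝ) (Y : Matrix (Fin n) (Fin n) ℝ)
    (hY : IsUnit Y.det)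
    (hV : ∀ i, V i = X * U i * Y) :
    opCap V = (X.det ^ 2) ^ ((1 : ℝ) / (m : ℝ)) * (Y.det ^ 2) ^ ((1 : ℝ) / (n : ℝ)) * opCap U := by
  obtain rfl : V = fun i ↦ X * (U i * Y) := funext fun i ↦ (hV i).trans (Matrix.mul_assoc _ _ _)
  rw [opCap_mul_left, opCap_mul_right U hY, mul_assoc]

/-- Change of operator capacity under scaling: if `Vᵢ = X Uᵢ Y` then
`cap(V) = det(X)^{2/m} det(Y)^{2/n} cap(U)`. -/
theorem opCap_scaling {k m n : ℕ} (hm : 0 < m) (hn : 0 < n)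
    (U V : Fin k → Matrix (Fin m) (Fin n) ℝ)
    (X : Matrix (Fin m) (Fin m) ℝ) (Y : Matrix (Fin n) (Fin n) ℝ)
    (hX : IsUnit X.det) (hY : IsUnit Y.det)
    (hV : ∀ i, V i = X * U i * Y) :
    opCap V = (X.det ^ 2) ^ ((1 : ℝ) / (m : ℝ)) * (Y.det ^ 2) ^ ((1 : ℝ) / (n : ℝ)) * opCap U :=
  opCap_scaling_general U V X Y hY hV
end

section
/- If A ∈ ℝ^{m×n}, X ∈ ℝ^{m×m} is a positive diagonal matrix, and Y ∈ ℝ^{n×n} is a positive diagonal matrix, then cap(XAY) = (∏_{i=1}^m X_{ii})^{1/m} · (∏_{j=1}^n Y_{jj})^{1/n} · cap(A). -/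
open Matrix BigOperators Pointwise

/-- Change of matrix capacity under scaling by positive diagonal matrices:
`cap(XAY) = (∏ᵢ Xᵢᵢ)^{1/m} (∏ⱼ Yⱼⱼ)^{1/n} cap(A)`. -/
theorem matCap_diagonal_scaling {m n : ℕ} (hm : 0 < m) (hn : 0 < n)
    (A : Matrix (Fin m) (Fin n) ℝ) (hA : ∀ i j, 0 ≤ A i j)
    (x : Fin m → ℝ) (y : Fin n → ℝ) (hx : ∀ i, 0 < x i) (hy : ∀ j, 0 < y j) :
    matCap (Matrix.diagonal x * A * Matrix.diagonal y) =
      (∏ i, x i) ^ ((1 : ℝ) / (m : ℝ)) * (∏ j, y j) ^ ((1 : ℝ) / (n : ℝ)) * matCap A := by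

  classical
  set k := (∏ i, x i) ^ ((1 : ℝ) / (m : ℝ)) * (∏ j, y j) ^ ((1 : ℝ) / (n : ℝ)) with hk
  have hP : 0 < ∏ i, x i := Finset.prod_pos (fun i _ => hx i)
  have hQ : 0 < ∏ j, y j := Finset.prod_pos (fun j _ => hy j)
  have hkpos : 0 < k :=
    mul_pos (Real.rpow_pos_of_pos hP _) (Real.rpow_pos_of_pos hQ _)
  have hmv : ∀ (z : Fin n → ℝ) (i : Fin m),
      (Matrix.diagonal x * A * Matrix.diagonal y).mulVec z i
        = x i * A.mulVec (fun j => y j * z j) i := by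
    intro z i
    rw [← Matrix.mulVec_mulVec, ← Matrix.mulVec_mulVec, Matrix.mulVec_diagonal]
    congr 1
    congr 1
    funext j
    exact Matrix.mulVec_diagonal _ _ _
  have key : ∀ z : Fin n → ℝ, (∀ j, 0 < z j) →
      (m : ℝ) * (∏ i, (Matrix.diagonal x * A * Matrix.diagonal y).mulVec z i) ^ ((1 : ℝ) / (m : ℝ))
          / (∏ j, z j) ^ ((1 : ℝ) / (n : ℝ))
        = k * ((m : ℝ) * (∏ i, A.mulVec (fun j => y j * z j) i) ^ ((1 : ℝ) / (m : ℝ))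
          / (∏ j, y j * z j) ^ ((1 : ℝ) / (n : ℝ))) := by
    intro z hz
    have hB : 0 ≤ ∏ i, A.mulVec (fun j => y j * z j) i := by
      apply Finset.prod_nonneg
      intro i _
      rw [Matrix.mulVec, dotProduct]
      apply Finset.sum_nonneg
      intro j _
      exact mul_nonneg (hA i j) (mul_pos (hy j) (hz j)).le
    have hW : 0 < ∏ j, y j * z j :=
      Finset.prod_pos (fun j _ => mul_pos (hy j) (hz j))
    have hZ : 0 < ∏ j, z j := Finset.prod_pos (fun j _ => hz j)
    have h1 : (∏ i, (Matrix.diagonal x * A * Matrix.diagonal y).mulVec z i)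
        = (∏ i, x i) * ∏ i, A.mulVec (fun j => y j * z j) i := by
      rw [← Finset.prod_mul_distrib]
      exact Finset.prod_congr rfl (fun i _ => hmv z i)
    have h2 : (∏ j, y j * z j) = (∏ j, y j) * ∏ j, z j := Finset.prod_mul_distrib
    rw [h1, Real.mul_rpow hP.le hB, h2, Real.mul_rpow hQ.le hZ.le]
    have e1 : (0:ℝ) < (∏ j, y j) ^ ((1 : ℝ) / (n : ℝ)) := Real.rpow_pos_of_pos hQ _
    have e2 : (0:ℝ) < (∏ j, z j) ^ ((1 : ℝ) / (n : ℝ)) := Real.rpow_pos_of_pos hZ _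
    field_simp
    ring
  have hset : {c : ℝ | ∃ z : Fin n → ℝ, (∀ j, 0 < z j) ∧
      c = (Fintype.card (Fin m) : ℝ) *
          (∏ i, (Matrix.diagonal x * A * Matrix.diagonal y).mulVec z i) ^
            ((1 : ℝ) / (Fintype.card (Fin m) : ℝ)) /
          (∏ j, z j) ^ ((1 : ℝ) / (Fintype.card (Fin n) : ℝ))}
      = (k • ({c : ℝ | ∃ z : Fin n → ℝ, (∀ j, 0 < z j) ∧
        c = (Fintype.card (Fin m) : ℝ) * (∏ i, A.mulVec z i) ^
            ((1 : ℝ) / (Fintype.card (Fin m) : ℝ)) /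
          (∏ j, z j) ^ ((1 : ℝ) / (Fintype.card (Fin n) : ℝ))} : Set ℝ) : Set ℝ) := by
    ext c
    simp only [Set.mem_setOf_eq, Set.mem_smul_set, Fintype.card_fin, smul_eq_mul]
    constructor
    · rintro ⟨z, hz, rfl⟩
      exact ⟨_, ⟨fun j => y j * z j, fun j => mul_pos (hy j) (hz j), rfl⟩, (key z hz).symm⟩
    · rintro ⟨b, ⟨w, hw, rfl⟩, rfl⟩
      refine ⟨fun j => w j / y j, fun j => div_pos (hw j) (hy j), ?_⟩
      have hz : ∀ j, 0 < w j / y j := fun j => div_pos (hw j) (hy j)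
      have := key (fun j => w j / y j) hz
      have hyw : (fun j => y j * (w j / y j)) = w := by
        funext j
        exact mul_div_cancel₀ (w j) (hy j).ne'
      rw [hyw] at this
      exact this.symm
  rw [matCap, matCap, hset, Real.sInf_smul_of_nonneg hkpos.le, smul_eq_mul]
end

section
/- In the matrix dynamical system dA_{ij}/dt = (2s − m r_i − n c_j) A_{ij}, where s, r_i, c_j refer to A∘A (entrywise square), the size s = ∑_{ij} A_{ij}² satisfies ds/dt = −2Δ, where Δ = (1/m)∑_{i=1}^m (s − m r_i)² + (1/n)∑_{j=1}^n (s − n c_j)². -/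
/-!
Write `xᵢ = s - m rᵢ` and `yⱼ = s - n cⱼ`. The ODE makes `Aᵢⱼ²` grow at rate `2 (xᵢ + yⱼ) Aᵢⱼ²`,
so `ds/dt = 2 (∑ xᵢ rᵢ + ∑ yⱼ cⱼ)`. Since `∑ xᵢ = 0` and `m rᵢ = s - xᵢ`, we get
`m ∑ xᵢ rᵢ = -∑ xᵢ²`, and likewise for the columns.
-/

open Finset

theorem Finset.sum_sub_card_mul_mul_self {ι : Type*} (s : Finset ι) (R : ι → ℝ) (S : ℝ)
    (hS : ∑ i ∈ s, R i = S) :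
    ∑ i ∈ s, (S - #s * R i) * R i = -(1 / (#s : ℝ)) * ∑ i ∈ s, (S - #s * R i) ^ 2 := by
  rcases s.eq_empty_or_nonempty with rfl | hs
  · simp
  have hk : (#s : ℝ) ≠ 0 := by exact_mod_cast hs.card_pos.ne'
  have hx : ∑ i ∈ s, (S - #s * R i) = 0 := by
    rw [sum_sub_distrib, ← mul_sum, hS, sum_const, nsmul_eq_mul, sub_self]
  have hsq : ∑ i ∈ s, (S - #s * R i) ^ 2 = -(#s * ∑ i ∈ s, (S - #s * R i) * R i) := by
    calc ∑ i ∈ s, (S - #s * R i) ^ 2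
        = S * ∑ i ∈ s, (S - #s * R i) - #s * ∑ i ∈ s, (S - #s * R i) * R i := by
          simp only [mul_sum, ← sum_sub_distrib]
          exact sum_congr rfl fun i _ => by ring
      _ = _ := by rw [hx]; ring
  rw [hsq]
  field_simp

theorem hasDerivAt_sum_sum_sq {ι κ : Type*} [Fintype ι] [Fintype κ] {A : ℝ → Matrix ι κ ℝ}
    {A' : Matrix ι κ ℝ} {t : ℝ} (hA : ∀ i j, HasDerivAt (fun τ => A τ i j) (A' i j) t) :
    HasDerivAt (fun τ => ∑ i, ∑ j, A τ i j ^ 2) (∑ i, ∑ j, 2 * A t i j * A' i j) t := by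
  refine HasDerivAt.fun_sum fun i _ => HasDerivAt.fun_sum fun j _ => ?_
  simpa using (hA i j).fun_pow 2

theorem sum_sum_add_mul_sq {ι κ : Type*} [Fintype ι] [Fintype κ] (a : Matrix ι κ ℝ)
    (x : ι → ℝ) (y : κ → ℝ) :
    ∑ i, ∑ j, (x i + y j) * a i j ^ 2 =
      ∑ i, x i * ∑ j, a i j ^ 2 + ∑ j, y j * ∑ i, a i j ^ 2 := by
  simp only [add_mul, sum_add_distrib, mul_sum]
  rw [sum_comm (f := fun i j => y j * a i j ^ 2)]

theorem matSize_deriv_general {m n : ℕ}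
    (A : ℝ → Matrix (Fin m) (Fin n) ℝ)
    (s : ℝ → ℝ) (r : ℝ → Fin m → ℝ) (c : ℝ → Fin n → ℝ) (Δ : ℝ → ℝ)
    (hr : ∀ t i, r t i = ∑ j, (A t i j) ^ 2)
    (hc : ∀ t j, c t j = ∑ i, (A t i j) ^ 2)
    (hs : ∀ t, s t = ∑ i, ∑ j, (A t i j) ^ 2)
    (hΔ : ∀ t, Δ t = (1 / (m : ℝ)) * ∑ i, (s t - (m : ℝ) * r t i) ^ 2 +
                     (1 / (n : ℝ)) * ∑ j, (s t - (n : ℝ) * c t j) ^ 2)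
    (hode : ∀ t i j, HasDerivAt (fun τ => A τ i j)
      ((2 * s t - (m : ℝ) * r t i - (n : ℝ) * c t j) * A t i j) t) :
    ∀ t, HasDerivAt s (-2 * Δ t) t := by
  intro t
  have hrs : ∑ i, r t i = s t := by simp only [hr, hs]
  have hcs : ∑ j, c t j = s t := by rw [hs, sum_comm]; simp only [hc]
  have hrows := sum_sub_card_mul_mul_self univ (r t) (s t) hrs
  have hcols := sum_sub_card_mul_mul_self univ (c t) (s t) hcs
  simp only [card_univ, Fintype.card_fin] at hrows hcols
  rw [show s = fun τ => ∑ i, ∑ j, A τ i j ^ 2 from funext hs]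
  convert hasDerivAt_sum_sum_sq (hode t) using 1
  calc -2 * Δ t
      = 2 * ∑ i, ∑ j, ((s t - m * r t i) + (s t - n * c t j)) * A t i j ^ 2 := by
        simp only [sum_sum_add_mul_sq, ← hr t, ← hc t]
        rw [hrows, hcols, hΔ]
        ring
    _ = _ := by
        rw [mul_sum]
        exact sum_congr rfl fun i _ => by rw [mul_sum]; exact sum_congr rfl fun j _ => by ring

/-- In the matrix dynamical system `dAᵢⱼ/dt = (2s - m rᵢ - n cⱼ) Aᵢⱼ` (with `s`, `rᵢ`, `cⱼ`
computed from the entrywise square of `A`), the size satisfies `ds/dt = -2Δ`. -/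
theorem matSize_deriv {m n : ℕ} (hm : 0 < m) (hn : 0 < n)
    (A : ℝ → Matrix (Fin m) (Fin n) ℝ)
    (s : ℝ → ℝ) (r : ℝ → Fin m → ℝ) (c : ℝ → Fin n → ℝ) (Δ : ℝ → ℝ)
    (hr : ∀ t i, r t i = ∑ j, (A t i j) ^ 2)
    (hc : ∀ t j, c t j = ∑ i, (A t i j) ^ 2)
    (hs : ∀ t, s t = ∑ i, ∑ j, (A t i j) ^ 2)
    (hΔ : ∀ t, Δ t = (1 / (m : ℝ)) * ∑ i, (s t - (m : ℝ) * r t i) ^ 2 +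
                     (1 / (n : ℝ)) * ∑ j, (s t - (n : ℝ) * c t j) ^ 2)
    (hode : ∀ t i j, HasDerivAt (fun τ => A τ i j)
      ((2 * s t - (m : ℝ) * r t i - (n : ℝ) * c t j) * A t i j) t) :
    ∀ t, HasDerivAt s (-2 * Δ t) t :=
  matSize_deriv_general A s r c Δ hr hc hs hΔ hode
end

section
/- In the matrix dynamical system dA_{ij}/dt = (2s − m r_i − n c_j) A_{ij} (with s, r_i, c_j computed from the entrywise square of A), the quantity Δ = (1/m)∑_i (s − m r_i)² + (1/n)∑_j (s − n c_j)² satisfies dΔ/dt = −4 ∑_{i=1}^m ∑_{j=1}^n (2s − m r_i − n c_j)² A_{ij}². -/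
/-!
Write `uᵢ = s - m rᵢ` and `vⱼ = s - n cⱼ`, so that the growth rate of `Aᵢⱼ` is `uᵢ + vⱼ` and
`d(Aᵢⱼ²)/dt = 2 (uᵢ + vⱼ) Aᵢⱼ²`. Since `∑ᵢ uᵢ = 0`, the derivative of `s` drops out of
`d/dt (1/m) ∑ᵢ uᵢ²`, which is just `-2 ∑ᵢ uᵢ ṙᵢ`; likewise for the columns. Expanding `ṙᵢ` and
`ċⱼ` as sums of `d(Aᵢⱼ²)/dt` gives `dΔ/dt = -2 ∑ᵢⱼ (uᵢ + vⱼ) · 2 (uᵢ + vⱼ) Aᵢⱼ²`.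
-/

open Finset

theorem sum_mul_sum_add_sum_mul_sum {ι κ R : Type*} [Fintype ι] [Fintype κ]
    [NonUnitalNonAssocSemiring R] (u : ι → R) (v : κ → R) (g : ι → κ → R) :
    ∑ i, u i * ∑ j, g i j + ∑ j, v j * ∑ i, g i j = ∑ i, ∑ j, (u i + v j) * g i j := by
  simp only [mul_sum, add_mul, sum_add_distrib]
  rw [sum_comm (f := fun j i => v j * g i j)]

theorem sum_sub_card_mul_eq_zero {ι R : Type*} [Fintype ι] [NonAssocRing R] (x : ι → R) :
    ∑ i, (∑ k, x k - Fintype.card ι * x i) = 0 := by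
  rw [sum_sub_distrib, ← mul_sum, sum_const, card_univ, nsmul_eq_mul, sub_self]

theorem hasDerivAt_inv_card_mul_sum_sq_sub_card_mul {ι : Type*} [Fintype ι]
    {R : ℝ → ι → ℝ} {R' : ι → ℝ} {t : ℝ} (hR : ∀ i, HasDerivAt (fun τ => R τ i) (R' i) t) :
    HasDerivAt (fun τ => 1 / (Fintype.card ι : ℝ) * ∑ i, (∑ k, R τ k - Fintype.card ι * R τ i) ^ 2)
      (-2 * ∑ i, (∑ k, R t k - Fintype.card ι * R t i) * R' i) t := by
  rcases isEmpty_or_nonempty ι with hι | hι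
  · simpa using hasDerivAt_const t (0 : ℝ)
  have hN : (Fintype.card ι : ℝ) ≠ 0 := by positivity
  have hS : HasDerivAt (fun τ => ∑ k, R τ k) (∑ k, R' k) t := HasDerivAt.fun_sum fun k _ => hR k
  have h := (HasDerivAt.fun_sum (u := univ) fun i _ =>
    ((hS.fun_sub ((hR i).const_mul (Fintype.card ι : ℝ))).fun_pow 2)).const_mul
      (1 / (Fintype.card ι : ℝ))
  refine h.congr_deriv ?_
  set N := (Fintype.card ι : ℝ)
  set u := fun i => ∑ k, R t k - N * R t i
  have hu : ∑ i, u i = 0 := sum_sub_card_mul_eq_zero (R t)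
  calc _ = 1 / N * ∑ i, (2 * (∑ k, R' k) * u i - 2 * N * (u i * R' i)) :=
        congrArg _ (sum_congr rfl fun i _ => by ring)
    _ = -2 * ∑ i, u i * R' i := by
        rw [sum_sub_distrib, ← mul_sum, ← mul_sum, hu]; field_simp; ring

theorem hasDerivAt_sq_of_hasDerivAt_mul_apply {f : ℝ → ℝ} {a t : ℝ}
    (hf : HasDerivAt f (a * f t) t) : HasDerivAt (fun τ => f τ ^ 2) (2 * a * f t ^ 2) t := by
  refine (hf.pow 2).congr_deriv ?_
  ring

theorem matDelta_deriv_general {m n : ℕ}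
    (A : ℝ → Matrix (Fin m) (Fin n) ℝ)
    (s : ℝ → ℝ) (r : ℝ → Fin m → ℝ) (c : ℝ → Fin n → ℝ) (Δ : ℝ → ℝ)
    (hr : ∀ t i, r t i = ∑ j, (A t i j) ^ 2)
    (hc : ∀ t j, c t j = ∑ i, (A t i j) ^ 2)
    (hs : ∀ t, s t = ∑ i, ∑ j, (A t i j) ^ 2)
    (hΔ : ∀ t, Δ t = (1 / (m : ℝ)) * ∑ i, (s t - (m : ℝ) * r t i) ^ 2 +
                     (1 / (n : ℝ)) * ∑ j, (s t - (n : ℝ) * c t j) ^ 2)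
    (hode : ∀ t i j, HasDerivAt (fun τ => A τ i j)
      ((2 * s t - (m : ℝ) * r t i - (n : ℝ) * c t j) * A t i j) t) :
    ∀ t, HasDerivAt Δ
      (-4 * ∑ i, ∑ j, (2 * s t - (m : ℝ) * r t i - (n : ℝ) * c t j) ^ 2 * (A t i j) ^ 2) t := by
  intro t
  set D := fun i j => 2 * s t - (m : ℝ) * r t i - (n : ℝ) * c t j
  have hsr : ∀ τ, s τ = ∑ i, r τ i := fun τ => by simp only [hs, hr]
  have hsc : ∀ τ, s τ = ∑ j, c τ j := fun τ => by rw [hs, sum_comm]; simp only [hc]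
  have hw i j := hasDerivAt_sq_of_hasDerivAt_mul_apply (hode t i j)
  have hr' : ∀ i, HasDerivAt (fun τ => r τ i) (∑ j, 2 * D i j * A t i j ^ 2) t := fun i => by
    refine (HasDerivAt.fun_sum (u := univ) fun j _ => hw i j).congr_of_eventuallyEq ?_
    exact .of_forall fun τ => hr τ i
  have hc' : ∀ j, HasDerivAt (fun τ => c τ j) (∑ i, 2 * D i j * A t i j ^ 2) t := fun j => by
    refine (HasDerivAt.fun_sum (u := univ) fun i _ => hw i j).congr_of_eventuallyEq ?_
    exact .of_forall fun τ => hc τ j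
  have hΔ' : Δ = fun τ => 1 / (m : ℝ) * ∑ i, (∑ k, r τ k - m * r τ i) ^ 2 +
      1 / (n : ℝ) * ∑ j, (∑ k, c τ k - n * c τ j) ^ 2 := by
    funext τ; rw [hΔ, ← hsr, ← hsc]
  rw [hΔ']
  have hrows := hasDerivAt_inv_card_mul_sum_sq_sub_card_mul hr'
  have hcols := hasDerivAt_inv_card_mul_sum_sq_sub_card_mul hc'
  rw [Fintype.card_fin] at hrows hcols
  refine (hrows.fun_add hcols).congr_deriv ?_
  rw [← hsr, ← hsc, ← mul_add, sum_mul_sum_add_sum_mul_sum]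
  simp only [mul_sum]
  refine sum_congr rfl fun i _ => sum_congr rfl fun j _ => ?_
  ring

/-- In the matrix dynamical system `dAᵢⱼ/dt = (2s - m rᵢ - n cⱼ) Aᵢⱼ` (with `s`, `rᵢ`, `cⱼ`
computed from the entrywise square of `A`), the quantity `Δ` satisfies
`dΔ/dt = -4 ∑ᵢⱼ (2s - m rᵢ - n cⱼ)² Aᵢⱼ²`. -/
theorem matDelta_deriv {m n : ℕ} (hm : 0 < m) (hn : 0 < n)
    (A : ℝ → Matrix (Fin m) (Fin n) ℝ)
    (s : ℝ → ℝ) (r : ℝ → Fin m → ℝ) (c : ℝ → Fin n → ℝ) (Δ : ℝ → ℝ)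
    (hr : ∀ t i, r t i = ∑ j, (A t i j) ^ 2)
    (hc : ∀ t j, c t j = ∑ i, (A t i j) ^ 2)
    (hs : ∀ t, s t = ∑ i, ∑ j, (A t i j) ^ 2)
    (hΔ : ∀ t, Δ t = (1 / (m : ℝ)) * ∑ i, (s t - (m : ℝ) * r t i) ^ 2 +
                     (1 / (n : ℝ)) * ∑ j, (s t - (n : ℝ) * c t j) ^ 2)
    (hode : ∀ t i j, HasDerivAt (fun τ => A τ i j)
      ((2 * s t - (m : ℝ) * r t i - (n : ℝ) * c t j) * A t i j) t) :
    ∀ t, HasDerivAt Δ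
      (-4 * ∑ i, ∑ j, (2 * s t - (m : ℝ) * r t i - (n : ℝ) * c t j) ^ 2 * (A t i j) ^ 2) t :=
  matDelta_deriv_general A s r c Δ hr hc hs hΔ hode
end

section
/- Let U = {u_1,…,u_n} with u_i ∈ ℝ^d and ∑_i ‖u_i‖² = d, and let v_i = √(d/n)·u_i/‖u_i‖ (so ‖v_i‖² = d/n for all i). Then the squared distance satisfies ∑_{i=1}^n ‖v_i − u_i‖² ≤ Δ(U)/d, where Δ(U) = d·‖I_d − ∑_i u_i u_i^T‖_F² + n·∑_i (d/n − ‖u_i‖²)². -/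
open Matrix BigOperators

lemma key_ineq {a c : ℝ} (ha : 0 < a) (hc : 0 < c) :
    (Real.sqrt c - a) ^ 2 ≤ (c - a ^ 2) ^ 2 / c := by
  have hs : Real.sqrt c ^ 2 = c := Real.sq_sqrt hc.le
  have hsn : 0 ≤ Real.sqrt c := Real.sqrt_nonneg c
  rw [le_div_iff₀ hc]
  nlinarith [mul_nonneg (sq_nonneg (Real.sqrt c - a)) (by positivity : (0:ℝ) ≤ a ^ 2 + 2 * a * Real.sqrt c)]

/-- Rescaling the vectors of a frame of size `d` to have equal norms moves the frame by
squared distance at most `Δ(U)/d`. -/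
theorem equal_norm_rescaling_movement {d n : ℕ} (hd : 0 < d) (hn : 0 < n)
    (u v : Fin n → EuclideanSpace ℝ (Fin d))
    (hu : ∀ i, u i ≠ 0)
    (hsize : ∑ i, ‖u i‖ ^ 2 = (d : ℝ))
    (hv : ∀ i, v i = (Real.sqrt ((d : ℝ) / (n : ℝ)) / ‖u i‖) • u i) :
    ∑ i, ‖v i - u i‖ ^ 2 ≤
      ((d : ℝ) * (∑ a, ∑ b, ((1 : Matrix (Fin d) (Fin d) ℝ) a b - ∑ i, u i a * u i b) ^ 2) +
        (n : ℝ) * ∑ i, ((d : ℝ) / (n : ℝ) - ‖u i‖ ^ 2) ^ 2) / (d : ℝ) := by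
  set c : ℝ := (d : ℝ) / (n : ℝ) with hcdef
  have hdpos : (0 : ℝ) < d := Nat.cast_pos.mpr hd
  have hnpos : (0 : ℝ) < n := Nat.cast_pos.mpr hn
  have hc : 0 < c := div_pos hdpos hnpos
  have step1 : ∀ i, ‖v i - u i‖ ^ 2 = (Real.sqrt c - ‖u i‖) ^ 2 := by
    intro i
    have hui : 0 < ‖u i‖ := norm_pos_iff.mpr (hu i)
    rw [hv i]
    have : (Real.sqrt c / ‖u i‖) • u i - u i = (Real.sqrt c / ‖u i‖ - 1) • u i := by
      rw [sub_smul, one_smul]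
    rw [this, norm_smul, Real.norm_eq_abs, mul_pow, sq_abs]
    field_simp
  have step2 : ∑ i, ‖v i - u i‖ ^ 2 ≤ ∑ i, (c - ‖u i‖ ^ 2) ^ 2 / c := by
    apply Finset.sum_le_sum
    intro i _
    rw [step1 i]
    exact key_ineq (norm_pos_iff.mpr (hu i)) hc
  have hA : 0 ≤ ∑ a, ∑ b, ((1 : Matrix (Fin d) (Fin d) ℝ) a b - ∑ i, u i a * u i b) ^ 2 := by
    apply Finset.sum_nonneg; intro a _
    apply Finset.sum_nonneg; intro b _
    positivity
  have heq : ∑ i, (c - ‖u i‖ ^ 2) ^ 2 / c = (n : ℝ) * (∑ i, (c - ‖u i‖ ^ 2) ^ 2) / d := by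
    rw [← Finset.sum_div, hcdef, div_div_eq_mul_div, mul_comm]
  calc ∑ i, ‖v i - u i‖ ^ 2 ≤ ∑ i, (c - ‖u i‖ ^ 2) ^ 2 / c := step2
    _ = (n : ℝ) * (∑ i, (c - ‖u i‖ ^ 2) ^ 2) / d := heq
    _ ≤ _ := by
        gcongr
        nlinarith [mul_nonneg hdpos.le hA]
end
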